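/- arXiv:0706.1502 — 6 statements merged into one kernel-verified Lean document; each statement's English description precedes it below -/
import Mathlib

section
/- Let T = Tri(A,M,B) be a triangular algebra where A satisfies (i) and B satisfies (ii). Then every multiplicative bijective map φ from T onto an arbitrary ring R' is additive, i.e. φ(s+t) = φ(s) + φ(t) for all s,t ∈ T. -/
/-- The triangular algebra `Tri(A, M, B)`: formal matrices `[[a, m], [0, b]]` with
`a ∈ A`, `m ∈ M`, `b ∈ B`, under the usual matrix operations. -/
@[ext]
structure Tri (A M B : Type*) where
  a : A
  m : M
  b : B

namespace Tri

variable {A M B : Type*}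

section AddGroup

variable [AddCommGroup A] [AddCommGroup M] [AddCommGroup B]

instance : Add (Tri A M B) := ⟨fun x y => ⟨x.a + y.a, x.m + y.m, x.b + y.b⟩⟩
instance : Zero (Tri A M B) := ⟨⟨0, 0, 0⟩⟩
instance : Neg (Tri A M B) := ⟨fun x => ⟨-x.a, -x.m, -x.b⟩⟩

@[simp] theorem add_a (x y : Tri A M B) : (x + y).a = x.a + y.a := rfl
@[simp] theorem add_m (x y : Tri A M B) : (x + y).m = x.m + y.m := rfl
@[simp] theorem add_b (x y : Tri A M B) : (x + y).b = x.b + y.b := rfl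
@[simp] theorem zero_a : (0 : Tri A M B).a = 0 := rfl
@[simp] theorem zero_m : (0 : Tri A M B).m = 0 := rfl
@[simp] theorem zero_b : (0 : Tri A M B).b = 0 := rfl
@[simp] theorem neg_a (x : Tri A M B) : (-x).a = -x.a := rfl
@[simp] theorem neg_m (x : Tri A M B) : (-x).m = -x.m := rfl
@[simp] theorem neg_b (x : Tri A M B) : (-x).b = -x.b := rfl

instance : AddCommGroup (Tri A M B) where
  add_assoc x y z := by ext <;> simp [add_assoc]
  zero_add x := by ext <;> simp
  add_zero x := by ext <;> simp
  nsmul := nsmulRec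
  zsmul := zsmulRec
  neg_add_cancel x := by ext <;> simp
  add_comm x y := by ext <;> simp [add_comm]

end AddGroup

section Mul

variable [NonUnitalRing A] [NonUnitalRing B] [AddCommGroup M]
  [SMul A M] [SMul Bᵐᵒᵖ M]

/-- Multiplication of formal upper-triangular matrices:
`[[a, m], [0, b]] * [[a', m'], [0, b']] = [[a * a', a • m' + m • b'], [0, b * b']]`,
where `m • b'` is the right action of `B`, encoded via `Bᵐᵒᵖ`. -/
instance : Mul (Tri A M B) :=
  ⟨fun x y => ⟨x.a * y.a, x.a • y.m + MulOpposite.op y.b • x.m, x.b * y.b⟩⟩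

end Mul

/-- The embedding of `A` as the corner `T₁₁` of the triangular algebra. -/
def e11 [Zero M] [Zero B] (a : A) : Tri A M B := ⟨a, 0, 0⟩

/-- The embedding of `M` as the corner `T₁₂` of the triangular algebra. -/
def e12 [Zero A] [Zero B] (m : M) : Tri A M B := ⟨0, m, 0⟩

/-- The embedding of `B` as the corner `T₂₂` of the triangular algebra. -/
def e22 [Zero A] [Zero M] (b : B) : Tri A M B := ⟨0, 0, b⟩

end Tri

/-- `M` is an `(A, B)`-bimodule (left `A`-action, right `B`-action encoded via `Bᵐᵒᵖ`)
compatible with the `R`-module structures, where `A` and `B` are (possibly non-unital)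
algebras over the commutative ring `R`. -/
class TriBimodule (R A M B : Type*) [CommRing R]
    [NonUnitalRing A] [NonUnitalRing B] [AddCommGroup M]
    [Module R A] [Module R B] [Module R M]
    [SMul A M] [SMul Bᵐᵒᵖ M] : Prop where
  smul_add_left : ∀ (a : A) (m m' : M), a • (m + m') = a • m + a • m'
  add_smul_left : ∀ (a a' : A) (m : M), (a + a') • m = a • m + a' • m
  mul_smul_left : ∀ (a a' : A) (m : M), (a * a') • m = a • (a' • m)
  smul_add_right : ∀ (b : Bᵐᵒᵖ) (m m' : M), b • (m + m') = b • m + b • m'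
  add_smul_right : ∀ (b b' : Bᵐᵒᵖ) (m : M), (b + b') • m = b • m + b' • m
  mul_smul_right : ∀ (b b' : Bᵐᵒᵖ) (m : M), (b * b') • m = b • (b' • m)
  smul_smul_comm : ∀ (a : A) (b : Bᵐᵒᵖ) (m : M), a • (b • m) = b • (a • m)
  rsmul_smul_left : ∀ (r : R) (a : A) (m : M), (r • a) • m = r • (a • m)
  rsmul_smul_right : ∀ (r : R) (b : Bᵐᵒᵖ) (m : M), (r • b) • m = r • (b • m)


section AuxTri

variable {A M B : Type*} [NonUnitalRing A] [NonUnitalRing B] [AddCommGroup M]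
  [SMul A M] [SMul Bᵐᵒᵖ M]

@[simp] theorem Tri.mul_a (x y : Tri A M B) : (x * y).a = x.a * y.a := rfl
@[simp] theorem Tri.mul_m (x y : Tri A M B) :
    (x * y).m = x.a • y.m + MulOpposite.op y.b • x.m := rfl
@[simp] theorem Tri.mul_b (x y : Tri A M B) : (x * y).b = x.b * y.b := rfl

@[simp] theorem Tri.e11_a (a : A) : (Tri.e11 a : Tri A M B).a = a := rfl
@[simp] theorem Tri.e11_m (a : A) : (Tri.e11 a : Tri A M B).m = 0 := rfl
@[simp] theorem Tri.e11_b (a : A) : (Tri.e11 a : Tri A M B).b = 0 := rfl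
@[simp] theorem Tri.e12_a (m : M) : (Tri.e12 m : Tri A M B).a = 0 := rfl
@[simp] theorem Tri.e12_m (m : M) : (Tri.e12 m : Tri A M B).m = m := rfl
@[simp] theorem Tri.e12_b (m : M) : (Tri.e12 m : Tri A M B).b = 0 := rfl
@[simp] theorem Tri.e22_a (b : B) : (Tri.e22 b : Tri A M B).a = 0 := rfl
@[simp] theorem Tri.e22_m (b : B) : (Tri.e22 b : Tri A M B).m = 0 := rfl
@[simp] theorem Tri.e22_b (b : B) : (Tri.e22 b : Tri A M B).b = b := rfl

end AuxTri

theorem mult_bijective_additive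
    {R A M B R' : Type*} [CommRing R]
    [NonUnitalRing A] [NonUnitalRing B] [AddCommGroup M]
    [Module R A] [Module R B] [Module R M]
    [SMulCommClass R A A] [IsScalarTower R A A]
    [SMulCommClass R B B] [IsScalarTower R B B]
    [SMul A M] [SMul Bᵐᵒᵖ M] [TriBimodule R A M B]
    (hfaithA : ∀ a : A, (∀ m : M, a • m = 0) → a = 0)
    (hfaithB : ∀ b : B, (∀ m : M, MulOpposite.op b • m = 0) → b = 0)
    (hA₁ : ∀ a : A, (∀ x : A, a * x = 0) → a = 0)
    (hA₂ : ∀ a : A, (∀ x : A, x * a = 0) → a = 0)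
    (hB₁ : ∀ b : B, (∀ y : B, b * y = 0) → b = 0)
    (hB₂ : ∀ b : B, (∀ y : B, y * b = 0) → b = 0)
    [Ring R'] (φ : Tri A M B → R')
    (hbij : Function.Bijective φ)
    (hmul : ∀ x y : Tri A M B, φ (x * y) = φ x * φ y) :
    ∀ s t : Tri A M B, φ (s + t) = φ s + φ t := by
  classical
  obtain ⟨hinj, hsurj⟩ := hbij
  -- basic smul facts from the bimodule axioms
  have s0A : ∀ m : M, (0 : A) • m = 0 := by
    intro m
    have h := TriBimodule.add_smul_left (R := R) (A := A) (M := M) (B := B) (0 : A) 0 m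
    rw [add_zero] at h
    exact (left_eq_add.mp h)
  have sA0 : ∀ a : A, a • (0 : M) = 0 := by
    intro a
    have h := TriBimodule.smul_add_left (R := R) (A := A) (M := M) (B := B) a (0 : M) 0
    rw [add_zero] at h
    exact (left_eq_add.mp h)
  have s0B : ∀ m : M, (0 : Bᵐᵒᵖ) • m = 0 := by
    intro m
    have h := TriBimodule.add_smul_right (R := R) (A := A) (M := M) (B := B) (0 : Bᵐᵒᵖ) 0 m
    rw [add_zero] at h
    exact (left_eq_add.mp h)
  have sB0 : ∀ b : Bᵐᵒᵖ, b • (0 : M) = 0 := by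
    intro b
    have h := TriBimodule.smul_add_right (R := R) (A := A) (M := M) (B := B) b (0 : M) 0
    rw [add_zero] at h
    exact (left_eq_add.mp h)
  -- separation lemmas from faithfulness
  have hsepA : ∀ x y : A, (∀ m : M, x • m = y • m) → x = y := by
    intro x y h
    have : x - y = 0 := by
      apply hfaithA
      intro m
      have h2 : (x - y) • m + y • m = x • m := by
        rw [← TriBimodule.add_smul_left (R := R) (A := A) (M := M) (B := B), sub_add_cancel]
      have h3 : (x - y) • m = x • m - y • m := eq_sub_of_add_eq h2
      rw [h3, h m, sub_self]
    exact sub_eq_zero.mp this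
  have hsepB : ∀ x y : B, (∀ m : M, MulOpposite.op x • m = MulOpposite.op y • m) → x = y := by
    intro x y h
    have : x - y = 0 := by
      apply hfaithB
      intro m
      have h2 : MulOpposite.op (x - y) • m + MulOpposite.op y • m = MulOpposite.op x • m := by
        rw [← TriBimodule.add_smul_right (R := R) (A := A) (M := M) (B := B), MulOpposite.op_sub, sub_add_cancel]
      have h3 : MulOpposite.op (x - y) • m = MulOpposite.op x • m - MulOpposite.op y • m :=
        eq_sub_of_add_eq h2
      rw [h3, h m, sub_self]
    exact sub_eq_zero.mp this
  -- the identity element of T, coming from 1 ∈ R'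
  obtain ⟨e, he⟩ := hsurj 1
  have hle : ∀ x : Tri A M B, e * x = x := by
    intro x; apply hinj; rw [hmul, he, one_mul]
  have hre : ∀ x : Tri A M B, x * e = x := by
    intro x; apply hinj; rw [hmul, he, mul_one]
  set eA : A := e.a with heA
  set eB : B := e.b with heB
  have heA_mul : ∀ a : A, eA * a = a := fun a => congrArg Tri.a (hle ⟨a, 0, 0⟩)
  have hmul_eA : ∀ a : A, a * eA = a := fun a => congrArg Tri.a (hre ⟨a, 0, 0⟩)
  have heB_mul : ∀ b : B, eB * b = b := fun b => congrArg Tri.b (hle ⟨0, 0, b⟩)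
  have hmul_eB : ∀ b : B, b * eB = b := fun b => congrArg Tri.b (hre ⟨0, 0, b⟩)
  have heA_smul : ∀ m : M, eA • m = m := by
    intro m
    have h := congrArg Tri.m (hle ⟨0, m, 0⟩)
    simpa [s0B] using h
  have hsmul_eB : ∀ m : M, MulOpposite.op eB • m = m := by
    intro m
    have h := congrArg Tri.m (hre ⟨0, m, 0⟩)
    simpa [s0A] using h
  -- φ 0 = 0
  obtain ⟨z, hz⟩ := hsurj 0
  have h0 : φ 0 = 0 := by
    have hz0 : (0 : Tri A M B) * z = 0 := by
      ext <;> simp [s0A, sA0, s0B, sB0]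
    calc φ 0 = φ (0 * z) := by rw [hz0]
      _ = φ 0 * φ z := hmul 0 z
      _ = 0 := by rw [hz, mul_zero]
  -- corner products
  have p11_11 : ∀ a a' : A, (Tri.e11 a : Tri A M B) * Tri.e11 a' = Tri.e11 (a * a') := by
    intro a a'; ext <;> simp [s0A, sA0, s0B, sB0]
  have p11_12 : ∀ (a : A) (m : M), (Tri.e11 a : Tri A M B) * Tri.e12 m = Tri.e12 (a • m) := by
    intro a m; ext <;> simp [s0A, sA0, s0B, sB0]
  have p11_22 : ∀ (a : A) (b : B), (Tri.e11 a : Tri A M B) * Tri.e22 b = 0 := by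
    intro a b; ext <;> simp [s0A, sA0, s0B, sB0]
  have p12_11 : ∀ (m : M) (a : A), (Tri.e12 m : Tri A M B) * Tri.e11 a = 0 := by
    intro m a; ext <;> simp [s0A, sA0, s0B, sB0]
  have p12_12 : ∀ (m m' : M), (Tri.e12 m : Tri A M B) * Tri.e12 m' = 0 := by
    intro m m'; ext <;> simp [s0A, sA0, s0B, sB0]
  have p12_22 : ∀ (m : M) (b : B),
      (Tri.e12 m : Tri A M B) * Tri.e22 b = Tri.e12 (MulOpposite.op b • m) := by
    intro m b; ext <;> simp [s0A, sA0, s0B, sB0]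
  have p22_11 : ∀ (b : B) (a : A), (Tri.e22 b : Tri A M B) * Tri.e11 a = 0 := by
    intro b a; ext <;> simp [s0A, sA0, s0B, sB0]
  have p22_12 : ∀ (b : B) (m : M), (Tri.e22 b : Tri A M B) * Tri.e12 m = 0 := by
    intro b m; ext <;> simp [s0A, sA0, s0B, sB0]
  have p22_22 : ∀ b b' : B, (Tri.e22 b : Tri A M B) * Tri.e22 b' = Tri.e22 (b * b') := by
    intro b b'; ext <;> simp [s0A, sA0, s0B, sB0]
  -- Lemma 2 : φ ⟨a, m, 0⟩ = φ (e11 a) + φ (e12 m)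
  have L2 : ∀ (a : A) (m : M), φ (⟨a, m, 0⟩ : Tri A M B) = φ (Tri.e11 a) + φ (Tri.e12 m) := by
    intro a m
    obtain ⟨s, hs⟩ := hsurj (φ (Tri.e11 a) + φ (Tri.e12 m))
    have key : ∀ u : Tri A M B, φ (s * u) = φ (Tri.e11 a * u) + φ (Tri.e12 m * u) := by
      intro u; rw [hmul, hs, add_mul, hmul, hmul]
    -- right-multiply by e22 eB : get s.m = m and s.b = 0
    have h1 : s * Tri.e22 eB = Tri.e12 (MulOpposite.op eB • m) := by
      apply hinj
      rw [key, p11_22, p12_22, h0, zero_add]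
    have hm : s.m = m := by
      have := congrArg Tri.m h1
      simpa [sA0, hsmul_eB] using this
    have hb : s.b = 0 := by
      have := congrArg Tri.b h1
      simpa [hmul_eB] using this
    -- right-multiply by e11 eA : get s.a = a
    have h2 : s * Tri.e11 eA = Tri.e11 (a * eA) := by
      apply hinj
      rw [key, p11_11, p12_11, h0, add_zero]
    have ha : s.a = a := by
      have := congrArg Tri.a h2
      simpa [hmul_eA] using this
    have : s = (⟨a, m, 0⟩ : Tri A M B) := by
      ext
      · exact ha
      · exact hm
      · exact hb
    rw [← this, hs]
  -- Lemma 2' : φ ⟨0, m, b⟩ = φ (e12 m) + φ (e22 b)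
  have L2' : ∀ (m : M) (b : B), φ (⟨0, m, b⟩ : Tri A M B) = φ (Tri.e12 m) + φ (Tri.e22 b) := by
    intro m b
    obtain ⟨s, hs⟩ := hsurj (φ (Tri.e12 m) + φ (Tri.e22 b))
    have key : ∀ u : Tri A M B, φ (u * s) = φ (u * Tri.e12 m) + φ (u * Tri.e22 b) := by
      intro u; rw [hmul, hs, mul_add, hmul, hmul]
    -- left-multiply by e11 eA : get s.a = 0 and s.m = m
    have h1 : Tri.e11 eA * s = Tri.e12 (eA • m) := by
      apply hinj
      rw [key, p11_12, p11_22, h0, add_zero]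
    have ha : s.a = 0 := by
      have := congrArg Tri.a (h1)
      have h2 : eA * s.a = 0 := by simpa using this
      rw [heA_mul s.a] at h2
      exact h2
    have hm : s.m = m := by
      have := congrArg Tri.m h1
      simpa [sB0, heA_smul] using this
    -- left-multiply by e12 m' : get s.b = b
    have hb : s.b = b := by
      apply hsepB
      intro m'
      have h3 : Tri.e12 m' * s = Tri.e12 (MulOpposite.op b • m') := by
        apply hinj
        rw [key, p12_12, p12_22, h0, zero_add]
      have := congrArg Tri.m h3
      simpa [s0A] using this
    have : s = (⟨0, m, b⟩ : Tri A M B) := by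
      ext
      · exact ha
      · exact hm
      · exact hb
    rw [← this, hs]
  -- Lemma 3 : additivity on the (1,2) corner
  have L3 : ∀ m m' : M, φ (Tri.e12 (m + m') : Tri A M B) = φ (Tri.e12 m) + φ (Tri.e12 m') := by
    intro m m'
    have hxy : (⟨eA, m, 0⟩ : Tri A M B) * ⟨0, m', eB⟩ = Tri.e12 (m + m') := by
      ext <;> simp [heA_smul, hsmul_eB, add_comm]
    calc φ (Tri.e12 (m + m') : Tri A M B)
        = φ ((⟨eA, m, 0⟩ : Tri A M B) * ⟨0, m', eB⟩) := by rw [hxy]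
      _ = φ (⟨eA, m, 0⟩ : Tri A M B) * φ (⟨0, m', eB⟩ : Tri A M B) := hmul _ _
      _ = (φ (Tri.e11 eA) + φ (Tri.e12 m)) * (φ (Tri.e12 m') + φ (Tri.e22 eB)) := by
          rw [L2, L2']
      _ = φ (Tri.e11 eA) * φ (Tri.e12 m') + φ (Tri.e11 eA) * φ (Tri.e22 eB)
          + (φ (Tri.e12 m) * φ (Tri.e12 m') + φ (Tri.e12 m) * φ (Tri.e22 eB)) := by
          rw [add_mul, mul_add, mul_add]
      _ = φ (Tri.e11 eA * Tri.e12 m') + φ (Tri.e11 eA * Tri.e22 eB)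
          + (φ (Tri.e12 m * Tri.e12 m') + φ (Tri.e12 m * Tri.e22 eB)) := by
          rw [hmul, hmul, hmul, hmul]
      _ = φ (Tri.e12 m) + φ (Tri.e12 m') := by
          rw [p11_12, p11_22, p12_12, p12_22, h0, heA_smul, hsmul_eB]
          abel
  -- Lemma 4 : additivity on the (1,1) corner
  have L4 : ∀ a a' : A, φ (Tri.e11 (a + a') : Tri A M B) = φ (Tri.e11 a) + φ (Tri.e11 a') := by
    intro a a'
    obtain ⟨s, hs⟩ := hsurj (φ (Tri.e11 a) + φ (Tri.e11 a'))
    have key : ∀ u : Tri A M B, φ (s * u) = φ (Tri.e11 a * u) + φ (Tri.e11 a' * u) := by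
      intro u; rw [hmul, hs, add_mul, hmul, hmul]
    have ha : s.a = a + a' := by
      apply hsepA
      intro m'
      have h3 : s * Tri.e12 m' = Tri.e12 ((a + a') • m') := by
        apply hinj
        rw [key, p11_12, p11_12, ← L3, TriBimodule.add_smul_left (R := R) (A := A) (M := M) (B := B)]
      have := congrArg Tri.m h3
      simpa [s0B] using this
    have h1 : s * Tri.e22 eB = 0 := by
      apply hinj
      rw [key, p11_22, p11_22, h0, add_zero]
    have hm : s.m = 0 := by
      have := congrArg Tri.m h1
      simpa [sA0, hsmul_eB] using this
    have hb : s.b = 0 := by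
      have := congrArg Tri.b h1
      simpa [hmul_eB] using this
    have : s = (Tri.e11 (a + a') : Tri A M B) := by
      ext
      · exact ha
      · exact hm
      · exact hb
    rw [← this, hs]
  -- Lemma 5 : additivity on the (2,2) corner
  have L5 : ∀ b b' : B, φ (Tri.e22 (b + b') : Tri A M B) = φ (Tri.e22 b) + φ (Tri.e22 b') := by
    intro b b'
    obtain ⟨s, hs⟩ := hsurj (φ (Tri.e22 b) + φ (Tri.e22 b'))
    have key : ∀ u : Tri A M B, φ (u * s) = φ (u * Tri.e22 b) + φ (u * Tri.e22 b') := by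
      intro u; rw [hmul, hs, mul_add, hmul, hmul]
    have hb : s.b = b + b' := by
      apply hsepB
      intro m'
      have h3 : Tri.e12 m' * s = Tri.e12 (MulOpposite.op (b + b') • m') := by
        apply hinj
        rw [key, p12_22, p12_22, ← L3, MulOpposite.op_add,
          TriBimodule.add_smul_right (R := R) (A := A) (M := M) (B := B)]
      have := congrArg Tri.m h3
      simpa [s0A] using this
    have h1 : Tri.e11 eA * s = 0 := by
      apply hinj
      rw [key, p11_22, p11_22, h0, add_zero]
    have ha : s.a = 0 := by
      have := congrArg Tri.a h1
      have h2 : eA * s.a = 0 := by simpa using this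
      rw [heA_mul s.a] at h2
      exact h2
    have hm : s.m = 0 := by
      have := congrArg Tri.m h1
      have h2 : eA • s.m + MulOpposite.op s.b • (0 : M) = 0 := by simpa using this
      rw [sB0, add_zero, heA_smul] at h2
      exact h2
    have : s = (Tri.e22 (b + b') : Tri A M B) := by
      ext
      · exact ha
      · exact hm
      · exact hb
    rw [← this, hs]
  -- Lemma 6 : φ splits over the three corners
  have L6 : ∀ (a : A) (m : M) (b : B),
      φ (⟨a, m, b⟩ : Tri A M B) = φ (Tri.e11 a) + φ (Tri.e12 m) + φ (Tri.e22 b) := by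
    intro a m b
    obtain ⟨s, hs⟩ := hsurj (φ (Tri.e11 a) + φ (Tri.e12 m) + φ (Tri.e22 b))
    have key : ∀ u : Tri A M B,
        φ (s * u) = φ (Tri.e11 a * u) + φ (Tri.e12 m * u) + φ (Tri.e22 b * u) := by
      intro u; rw [hmul, hs, add_mul, add_mul, hmul, hmul, hmul]
    have h1 : s * Tri.e11 eA = Tri.e11 (a * eA) := by
      apply hinj
      rw [key, p11_11, p12_11, p22_11, h0, add_zero, add_zero]
    have ha : s.a = a := by
      have := congrArg Tri.a h1
      simpa [hmul_eA] using this
    have h2 : s * Tri.e22 eB = (⟨0, MulOpposite.op eB • m, b * eB⟩ : Tri A M B) := by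
      apply hinj
      rw [key, p11_22, p12_22, p22_22, h0, zero_add, ← L2']
    have hm : s.m = m := by
      have := congrArg Tri.m h2
      simpa [sA0, hsmul_eB] using this
    have hb : s.b = b := by
      have := congrArg Tri.b h2
      simpa [hmul_eB] using this
    have : s = (⟨a, m, b⟩ : Tri A M B) := by
      ext
      · exact ha
      · exact hm
      · exact hb
    rw [← this, hs]
  -- conclusion
  intro s t
  calc φ (s + t)
      = φ (Tri.e11 (s.a + t.a)) + φ (Tri.e12 (s.m + t.m)) + φ (Tri.e22 (s.b + t.b)) :=
        L6 (s.a + t.a) (s.m + t.m) (s.b + t.b)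
    _ = φ (Tri.e11 s.a) + φ (Tri.e11 t.a) + (φ (Tri.e12 s.m) + φ (Tri.e12 t.m))
        + (φ (Tri.e22 s.b) + φ (Tri.e22 t.b)) := by rw [L4, L3, L5]
    _ = (φ (Tri.e11 s.a) + φ (Tri.e12 s.m) + φ (Tri.e22 s.b))
        + (φ (Tri.e11 t.a) + φ (Tri.e12 t.m) + φ (Tri.e22 t.b)) := by abel
    _ = φ s + φ t := by
        exact congrArg₂ (· + ·) (L6 s.a s.m s.b).symm (L6 t.a t.m t.b).symm
end

section
/- Let A and B be unital algebras over a commutative ring R, M a faithful (A,B)-bimodule, and T = Tri(A,M,B) the triangular algebra. Then every multiplicative bijective map from T onto an arbitrary ring R' is additive. -/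
theorem mult_bijective_additive_of_unital
    {R A M B R' : Type*} [CommRing R]
    [Ring A] [Ring B] [Algebra R A] [Algebra R B]
    [AddCommGroup M] [Module R M] [Module A M] [Module Bᵐᵒᵖ M]
    [SMulCommClass A Bᵐᵒᵖ M] [IsScalarTower R A M] [IsScalarTower R Bᵐᵒᵖ M]
    (hfaithA : ∀ a : A, (∀ m : M, a • m = 0) → a = 0)
    (hfaithB : ∀ b : B, (∀ m : M, MulOpposite.op b • m = 0) → b = 0)
    [Ring R'] (φ : Tri A M B → R')
    (hbij : Function.Bijective φ)
    (hmul : ∀ x y : Tri A M B, φ (x * y) = φ x * φ y) :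
    ∀ s t : Tri A M B, φ (s + t) = φ s + φ t := by
  obtain ⟨hinj, hsurj⟩ := hbij
  have hL : ∀ (w x y s : Tri A M B), φ s = φ x + φ y →
      φ (w * s) = φ (w * x) + φ (w * y) := by
    intro w x y s h
    rw [hmul, h, mul_add, ← hmul, ← hmul]
  have hR : ∀ (w x y s : Tri A M B), φ s = φ x + φ y →
      φ (s * w) = φ (x * w) + φ (y * w) := by
    intro w x y s h
    rw [hmul, h, add_mul, ← hmul, ← hmul]
  have hL3 : ∀ (w x y z s : Tri A M B), φ s = φ x + φ y + φ z →
      φ (w * s) = φ (w * x) + φ (w * y) + φ (w * z) := by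
    intro w x y z s h
    rw [hmul, h, mul_add, mul_add, ← hmul, ← hmul, ← hmul]
  have hR3 : ∀ (w x y z s : Tri A M B), φ s = φ x + φ y + φ z →
      φ (s * w) = φ (x * w) + φ (y * w) + φ (z * w) := by
    intro w x y z s h
    rw [hmul, h, add_mul, add_mul, ← hmul, ← hmul, ← hmul]
  have hz : φ 0 = 0 := by
    obtain ⟨s, hs⟩ := hsurj 0
    have h0 : (0 : Tri A M B) * s = 0 := by ext <;> simp
    calc φ 0 = φ (0 * s) := by rw [h0]
      _ = φ 0 * φ s := hmul _ _
      _ = 0 := by rw [hs, mul_zero]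
  -- Step 2: additivity on the (1,1)+(1,2) corners
  have step2 : ∀ (a : A) (m : M),
      φ ⟨a, m, 0⟩ = φ (Tri.e11 a) + φ (Tri.e12 m) := by
    intro a m
    obtain ⟨s, hs⟩ := hsurj (φ (Tri.e11 a) + φ (Tri.e12 m))
    obtain ⟨c, n, d⟩ := s
    have h1 := hR ⟨1, 0, 0⟩ (Tri.e11 a) (Tri.e12 m) ⟨c, n, d⟩ hs
    have p1 : (⟨c, n, d⟩ : Tri A M B) * ⟨1, 0, 0⟩ = ⟨c, 0, 0⟩ := by ext <;> simp
    have p2 : (Tri.e11 a : Tri A M B) * ⟨1, 0, 0⟩ = Tri.e11 a := by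
      ext <;> simp [Tri.e11]
    have p3 : (Tri.e12 m : Tri A M B) * ⟨1, 0, 0⟩ = 0 := by ext <;> simp [Tri.e12]
    rw [p1, p2, p3, hz, add_zero] at h1
    have hc : c = a := congrArg Tri.a (hinj h1)
    have h2 := hR ⟨0, 0, 1⟩ (Tri.e11 a) (Tri.e12 m) ⟨c, n, d⟩ hs
    have q1 : (⟨c, n, d⟩ : Tri A M B) * ⟨0, 0, 1⟩ = ⟨0, n, d⟩ := by ext <;> simp
    have q2 : (Tri.e11 a : Tri A M B) * ⟨0, 0, 1⟩ = 0 := by ext <;> simp [Tri.e11]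
    have q3 : (Tri.e12 m : Tri A M B) * ⟨0, 0, 1⟩ = Tri.e12 m := by
      ext <;> simp [Tri.e12]
    rw [q1, q2, q3, hz, zero_add] at h2
    have h2' := hinj h2
    have hn : n = m := congrArg Tri.m h2'
    have hd : d = 0 := congrArg Tri.b h2'
    subst hc; subst hn; subst hd
    exact hs
  -- Step 2': additivity on the (1,2)+(2,2) corners
  have step2' : ∀ (m : M) (b : B),
      φ ⟨0, m, b⟩ = φ (Tri.e12 m) + φ (Tri.e22 b) := by
    intro m b
    obtain ⟨s, hs⟩ := hsurj (φ (Tri.e12 m) + φ (Tri.e22 b))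
    obtain ⟨c, n, d⟩ := s
    have h1 := hL ⟨1, 0, 0⟩ (Tri.e12 m) (Tri.e22 b) ⟨c, n, d⟩ hs
    have p1 : (⟨1, 0, 0⟩ : Tri A M B) * ⟨c, n, d⟩ = ⟨c, n, 0⟩ := by ext <;> simp
    have p2 : (⟨1, 0, 0⟩ : Tri A M B) * Tri.e12 m = Tri.e12 m := by
      ext <;> simp [Tri.e12]
    have p3 : (⟨1, 0, 0⟩ : Tri A M B) * Tri.e22 b = 0 := by ext <;> simp [Tri.e22]
    rw [p1, p2, p3, hz, add_zero] at h1
    have h1' := hinj h1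
    have hc : c = 0 := congrArg Tri.a h1'
    have hn : n = m := congrArg Tri.m h1'
    have h2 := hL ⟨0, 0, 1⟩ (Tri.e12 m) (Tri.e22 b) ⟨c, n, d⟩ hs
    have q1 : (⟨0, 0, 1⟩ : Tri A M B) * ⟨c, n, d⟩ = ⟨0, 0, d⟩ := by ext <;> simp
    have q2 : (⟨0, 0, 1⟩ : Tri A M B) * Tri.e12 m = 0 := by ext <;> simp [Tri.e12]
    have q3 : (⟨0, 0, 1⟩ : Tri A M B) * Tri.e22 b = Tri.e22 b := by
      ext <;> simp [Tri.e22]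
    rw [q1, q2, q3, hz, zero_add] at h2
    have hd : d = b := congrArg Tri.b (hinj h2)
    subst hc; subst hn; subst hd
    exact hs
  -- Step 3: additivity on the (1,2) corner
  have step3 : ∀ m m' : M,
      φ (Tri.e12 (m + m')) = φ (Tri.e12 m) + φ (Tri.e12 m') := by
    intro m m'
    have hx : φ (⟨1, m, 0⟩ : Tri A M B) = φ (Tri.e11 1) + φ (Tri.e12 m) := step2 1 m
    have hy : φ (⟨0, m', 1⟩ : Tri A M B) = φ (Tri.e12 m') + φ (Tri.e22 1) :=
      step2' m' 1
    have hp : (⟨1, m, 0⟩ : Tri A M B) * ⟨0, m', 1⟩ = Tri.e12 (m + m') := by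
      ext <;> simp [Tri.e12, add_comm]
    have key := hmul (⟨1, m, 0⟩ : Tri A M B) ⟨0, m', 1⟩
    rw [hp, hx, hy, add_mul, mul_add, mul_add, ← hmul, ← hmul, ← hmul, ← hmul]
      at key
    have r1 : (Tri.e11 1 : Tri A M B) * Tri.e12 m' = Tri.e12 m' := by
      ext <;> simp [Tri.e11, Tri.e12]
    have r2 : (Tri.e11 1 : Tri A M B) * Tri.e22 1 = 0 := by
      ext <;> simp [Tri.e11, Tri.e22]
    have r3 : (Tri.e12 m : Tri A M B) * Tri.e12 m' = 0 := by ext <;> simp [Tri.e12]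
    have r4 : (Tri.e12 m : Tri A M B) * Tri.e22 1 = Tri.e12 m := by
      ext <;> simp [Tri.e12, Tri.e22]
    rw [r1, r2, r3, r4, hz] at key
    rw [key]; abel
  -- Step 4: additivity on the (1,1) corner
  have step4 : ∀ a a' : A,
      φ (Tri.e11 (a + a')) = φ (Tri.e11 a) + φ (Tri.e11 a') := by
    intro a a'
    obtain ⟨s, hs⟩ := hsurj (φ (Tri.e11 a) + φ (Tri.e11 a'))
    obtain ⟨c, n, d⟩ := s
    have h1 := hR ⟨1, 0, 0⟩ (Tri.e11 a) (Tri.e11 a') ⟨c, n, d⟩ hs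
    have p1 : (⟨c, n, d⟩ : Tri A M B) * ⟨1, 0, 0⟩ = ⟨c, 0, 0⟩ := by ext <;> simp
    have p2 : ∀ x : A, (Tri.e11 x : Tri A M B) * ⟨1, 0, 0⟩ = Tri.e11 x := by
      intro x; ext <;> simp [Tri.e11]
    rw [p1, p2, p2, ← hs] at h1
    have h1' := hinj h1
    have hn : n = 0 := (congrArg Tri.m h1').symm
    have hd : d = 0 := (congrArg Tri.b h1').symm
    have hc : c = a + a' := by
      have key : ∀ m : M, c • m = (a + a') • m := by
        intro m
        have h2 := hR (Tri.e12 m) (Tri.e11 a) (Tri.e11 a') ⟨c, n, d⟩ hs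
        have q1 : (⟨c, n, d⟩ : Tri A M B) * Tri.e12 m = Tri.e12 (c • m) := by
          ext <;> simp [Tri.e12]
        have q2 : ∀ x : A, (Tri.e11 x : Tri A M B) * Tri.e12 m
            = Tri.e12 (x • m) := by
          intro x; ext <;> simp [Tri.e11, Tri.e12]
        rw [q1, q2, q2, ← step3] at h2
        have h3 := congrArg Tri.m (hinj h2)
        simpa [Tri.e12, add_smul] using h3
      have h0 : ∀ m : M, (c - (a + a')) • m = 0 := fun m => by
        rw [sub_smul, key m, sub_self]
      exact sub_eq_zero.mp (hfaithA _ h0)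
    subst hn; subst hd; subst hc
    exact hs
  -- Step 4': additivity on the (2,2) corner
  have step4' : ∀ b b' : B,
      φ (Tri.e22 (b + b')) = φ (Tri.e22 b) + φ (Tri.e22 b') := by
    intro b b'
    obtain ⟨s, hs⟩ := hsurj (φ (Tri.e22 b) + φ (Tri.e22 b'))
    obtain ⟨c, n, d⟩ := s
    have h1 := hL ⟨0, 0, 1⟩ (Tri.e22 b) (Tri.e22 b') ⟨c, n, d⟩ hs
    have p1 : (⟨0, 0, 1⟩ : Tri A M B) * ⟨c, n, d⟩ = ⟨0, 0, d⟩ := by ext <;> simp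
    have p2 : ∀ x : B, (⟨0, 0, 1⟩ : Tri A M B) * Tri.e22 x = Tri.e22 x := by
      intro x; ext <;> simp [Tri.e22]
    rw [p1, p2, p2, ← hs] at h1
    have h1' := hinj h1
    have hc : c = 0 := (congrArg Tri.a h1').symm
    have hn : n = 0 := (congrArg Tri.m h1').symm
    have hd : d = b + b' := by
      have key : ∀ m : M,
          MulOpposite.op d • m = MulOpposite.op (b + b') • m := by
        intro m
        have h2 := hL (Tri.e12 m) (Tri.e22 b) (Tri.e22 b') ⟨c, n, d⟩ hs
        have q1 : (Tri.e12 m : Tri A M B) * ⟨c, n, d⟩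
            = Tri.e12 (MulOpposite.op d • m) := by
          ext <;> simp [Tri.e12]
        have q2 : ∀ x : B, (Tri.e12 m : Tri A M B) * Tri.e22 x
            = Tri.e12 (MulOpposite.op x • m) := by
          intro x; ext <;> simp [Tri.e12, Tri.e22]
        rw [q1, q2, q2, ← step3] at h2
        have h3 := congrArg Tri.m (hinj h2)
        simpa [Tri.e12, MulOpposite.op_add, add_smul] using h3
      have h0 : ∀ m : M, MulOpposite.op (d - (b + b')) • m = 0 := fun m => by
        rw [MulOpposite.op_sub, sub_smul, key m, sub_self]
      exact sub_eq_zero.mp (hfaithB _ h0)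
    subst hc; subst hn; subst hd
    exact hs
  -- Step 5: full Peirce decomposition
  have step5 : ∀ (a : A) (m : M) (b : B),
      φ ⟨a, m, b⟩ = φ (Tri.e11 a) + φ (Tri.e12 m) + φ (Tri.e22 b) := by
    intro a m b
    obtain ⟨s, hs⟩ := hsurj (φ (Tri.e11 a) + φ (Tri.e12 m) + φ (Tri.e22 b))
    obtain ⟨c, n, d⟩ := s
    have h1 := hL3 ⟨1, 0, 0⟩ (Tri.e11 a) (Tri.e12 m) (Tri.e22 b) ⟨c, n, d⟩ hs
    have p1 : (⟨1, 0, 0⟩ : Tri A M B) * ⟨c, n, d⟩ = ⟨c, n, 0⟩ := by ext <;> simp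
    have p2 : (⟨1, 0, 0⟩ : Tri A M B) * Tri.e11 a = Tri.e11 a := by
      ext <;> simp [Tri.e11]
    have p3 : (⟨1, 0, 0⟩ : Tri A M B) * Tri.e12 m = Tri.e12 m := by
      ext <;> simp [Tri.e12]
    have p4 : (⟨1, 0, 0⟩ : Tri A M B) * Tri.e22 b = 0 := by ext <;> simp [Tri.e22]
    rw [p1, p2, p3, p4, hz, add_zero, ← step2] at h1
    have h1' := hinj h1
    have hc : c = a := congrArg Tri.a h1'
    have hn : n = m := congrArg Tri.m h1'
    have h2 := hR3 ⟨0, 0, 1⟩ (Tri.e11 a) (Tri.e12 m) (Tri.e22 b) ⟨c, n, d⟩ hs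
    have q1 : (⟨c, n, d⟩ : Tri A M B) * ⟨0, 0, 1⟩ = ⟨0, n, d⟩ := by ext <;> simp
    have q2 : (Tri.e11 a : Tri A M B) * ⟨0, 0, 1⟩ = 0 := by ext <;> simp [Tri.e11]
    have q3 : (Tri.e12 m : Tri A M B) * ⟨0, 0, 1⟩ = Tri.e12 m := by
      ext <;> simp [Tri.e12]
    have q4 : (Tri.e22 b : Tri A M B) * ⟨0, 0, 1⟩ = Tri.e22 b := by
      ext <;> simp [Tri.e22]
    rw [q1, q2, q3, q4, hz, zero_add, ← step2'] at h2
    have hd : d = b := congrArg Tri.b (hinj h2)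
    subst hc; subst hn; subst hd
    exact hs
  intro s t
  obtain ⟨a, m, b⟩ := s
  obtain ⟨a', m', b'⟩ := t
  have hsum : (⟨a, m, b⟩ : Tri A M B) + ⟨a', m', b'⟩
      = ⟨a + a', m + m', b + b'⟩ := rfl
  rw [hsum, step5 (a + a') (m + m') (b + b'), step4, step3, step4',
    step5 a m b, step5 a' m' b']
  abel
end

section
/- Let A and B be standard operator algebras on a Banach space X, M a faithful (A,B)-bimodule, and T = Tri(A,M,B) the triangular algebra. Then every multiplicative bijective map from T onto an arbitrary ring R' is additive. -/
namespace Tri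

variable {A M B : Type*}

set_option linter.unusedSectionVars false

section AuxAdd
variable [AddCommGroup A] [AddCommGroup M] [AddCommGroup B]
@[simp] theorem sub_a (x y : Tri A M B) : (x - y).a = x.a - y.a := by
  simp [sub_eq_add_neg]
@[simp] theorem sub_m (x y : Tri A M B) : (x - y).m = x.m - y.m := by
  simp [sub_eq_add_neg]
@[simp] theorem sub_b (x y : Tri A M B) : (x - y).b = x.b - y.b := by
  simp [sub_eq_add_neg]
end AuxAdd

section AuxE
variable [Zero A] [Zero M] [Zero B]
@[simp] theorem e11_a_s2 (a : A) : (e11 a : Tri A M B).a = a := rfl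
@[simp] theorem e11_m_s2 (a : A) : (e11 a : Tri A M B).m = 0 := rfl
@[simp] theorem e11_b_s2 (a : A) : (e11 a : Tri A M B).b = 0 := rfl
@[simp] theorem e12_a_s2 (m : M) : (e12 m : Tri A M B).a = 0 := rfl
@[simp] theorem e12_m_s2 (m : M) : (e12 m : Tri A M B).m = m := rfl
@[simp] theorem e12_b_s2 (m : M) : (e12 m : Tri A M B).b = 0 := rfl
@[simp] theorem e22_a_s2 (b : B) : (e22 b : Tri A M B).a = 0 := rfl
@[simp] theorem e22_m_s2 (b : B) : (e22 b : Tri A M B).m = 0 := rfl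
@[simp] theorem e22_b_s2 (b : B) : (e22 b : Tri A M B).b = b := rfl
end AuxE

section AuxMul
variable [NonUnitalRing A] [NonUnitalRing B] [AddCommGroup M]
  [SMul A M] [SMul Bᵐᵒᵖ M]
@[simp] theorem mul_a_s2 (x y : Tri A M B) : (x * y).a = x.a * y.a := rfl
@[simp] theorem mul_m_s2 (x y : Tri A M B) :
    (x * y).m = x.a • y.m + MulOpposite.op y.b • x.m := rfl
@[simp] theorem mul_b_s2 (x y : Tri A M B) : (x * y).b = x.b * y.b := rfl
end AuxMul

end Tri

section Generic

variable {A M B R' : Type*} [NonUnitalRing A] [NonUnitalRing B] [AddCommGroup M]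
  [SMul A M] [SMul Bᵐᵒᵖ M] [Ring R']

/-- Generic form: every multiplicative bijection from a triangular ring (with faithful
bimodule actions) onto a unital ring is additive. -/
theorem Tri.mult_bijective_additive_generic
    (saL : ∀ (a : A) (m m' : M), a • (m + m') = a • m + a • m')
    (asL : ∀ (a a' : A) (m : M), (a + a') • m = a • m + a' • m)
    (saR : ∀ (b : Bᵐᵒᵖ) (m m' : M), b • (m + m') = b • m + b • m')
    (asR : ∀ (b b' : Bᵐᵒᵖ) (m : M), (b + b') • m = b • m + b' • m)
    (ssc : ∀ (a : A) (b : Bᵐᵒᵖ) (m : M), a • (b • m) = b • (a • m))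
    (hfaithA : ∀ a : A, (∀ m : M, a • m = 0) → a = 0)
    (hfaithB : ∀ b : Bᵐᵒᵖ, (∀ m : M, b • m = 0) → b = 0)
    (φ : Tri A M B → R')
    (hinj : Function.Injective φ) (hsurj : Function.Surjective φ)
    (hmul : ∀ x y : Tri A M B, φ (x * y) = φ x * φ y) :
    ∀ s t : Tri A M B, φ (s + t) = φ s + φ t := by
  have hA0 : ∀ a : A, a • (0 : M) = 0 := by
    intro a
    have h := saL a 0 0
    rw [add_zero] at h
    exact left_eq_add.mp h
  have h0A : ∀ m : M, (0 : A) • m = 0 := by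
    intro m
    have h := asL 0 0 m
    rw [add_zero] at h
    exact left_eq_add.mp h
  have hB0 : ∀ b : Bᵐᵒᵖ, b • (0 : M) = 0 := by
    intro b
    have h := saR b 0 0
    rw [add_zero] at h
    exact left_eq_add.mp h
  have h0B : ∀ m : M, (0 : Bᵐᵒᵖ) • m = 0 := by
    intro m
    have h := asR 0 0 m
    rw [add_zero] at h
    exact left_eq_add.mp h
  have hAneg : ∀ (a : A) (m : M), a • (-m) = -(a • m) := by
    intro a m
    have h := saL a m (-m)
    rw [add_neg_cancel, hA0] at h
    exact eq_neg_of_add_eq_zero_right h.symm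
  have hAsubM : ∀ (a : A) (m m' : M), a • (m - m') = a • m - a • m' := by
    intro a m m'
    rw [sub_eq_add_neg, saL, hAneg, ← sub_eq_add_neg]
  have hnegA : ∀ (a : A) (m : M), (-a) • m = -(a • m) := by
    intro a m
    have h := asL a (-a) m
    rw [add_neg_cancel, h0A] at h
    exact eq_neg_of_add_eq_zero_right h.symm
  have hsubA : ∀ (a a' : A) (m : M), (a - a') • m = a • m - a' • m := by
    intro a a' m
    rw [sub_eq_add_neg, asL, hnegA, ← sub_eq_add_neg]
  have hBneg : ∀ (b : Bᵐᵒᵖ) (m : M), b • (-m) = -(b • m) := by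
    intro b m
    have h := saR b m (-m)
    rw [add_neg_cancel, hB0] at h
    exact eq_neg_of_add_eq_zero_right h.symm
  have hBsubM : ∀ (b : Bᵐᵒᵖ) (m m' : M), b • (m - m') = b • m - b • m' := by
    intro b m m'
    rw [sub_eq_add_neg, saR, hBneg, ← sub_eq_add_neg]
  have hnegB : ∀ (b : Bᵐᵒᵖ) (m : M), (-b) • m = -(b • m) := by
    intro b m
    have h := asR b (-b) m
    rw [add_neg_cancel, h0B] at h
    exact eq_neg_of_add_eq_zero_right h.symm
  have hsubB : ∀ (b b' : Bᵐᵒᵖ) (m : M), (b - b') • m = b • m - b' • m := by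
    intro b b' m
    rw [sub_eq_add_neg, asR, hnegB, ← sub_eq_add_neg]
  -- corner products
  have pAA : ∀ (a a' : A), (Tri.e11 a : Tri A M B) * Tri.e11 a' = Tri.e11 (a * a') := by
    intro a a'; ext <;> simp [hA0, h0A, hB0, h0B]
  have pAM : ∀ (a : A) (m : M), (Tri.e11 a : Tri A M B) * Tri.e12 m = Tri.e12 (a • m) := by
    intro a m; ext <;> simp [hA0, h0A, hB0, h0B]
  have pAB : ∀ (a : A) (b : B), (Tri.e11 a : Tri A M B) * Tri.e22 b = 0 := by
    intro a b; ext <;> simp [hA0, h0A, hB0, h0B]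
  have pMA : ∀ (m : M) (a : A), (Tri.e12 m : Tri A M B) * Tri.e11 a = 0 := by
    intro m a; ext <;> simp [hA0, h0A, hB0, h0B]
  have pMM : ∀ (m m' : M), (Tri.e12 m : Tri A M B) * Tri.e12 m' = 0 := by
    intro m m'; ext <;> simp [hA0, h0A, hB0, h0B]
  have pMB : ∀ (m : M) (b : B),
      (Tri.e12 m : Tri A M B) * Tri.e22 b = Tri.e12 (MulOpposite.op b • m) := by
    intro m b; ext <;> simp [hA0, h0A, hB0, h0B]
  have pBA : ∀ (b : B) (a : A), (Tri.e22 b : Tri A M B) * Tri.e11 a = 0 := by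
    intro b a; ext <;> simp [hA0, h0A, hB0, h0B]
  have pBM : ∀ (b : B) (m : M), (Tri.e22 b : Tri A M B) * Tri.e12 m = 0 := by
    intro b m; ext <;> simp [hA0, h0A, hB0, h0B]
  have pBB : ∀ (b b' : B), (Tri.e22 b : Tri A M B) * Tri.e22 b' = Tri.e22 (b * b') := by
    intro b b'; ext <;> simp [hA0, h0A, hB0, h0B]
  -- φ 0 = 0
  obtain ⟨x₀, hx₀⟩ := hsurj 0
  have hφ0 : φ 0 = 0 := by
    have h := hmul 0 x₀
    have h0 : (0 : Tri A M B) * x₀ = 0 := by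
      ext <;> simp [hA0, h0A, hB0, h0B]
    rw [h0, hx₀, mul_zero] at h
    exact h
  -- annihilator lemmas
  obtain ⟨x₁, hx₁⟩ := hsurj 1
  have annL : ∀ n : Tri A M B, (∀ x, n * x = 0) → n = 0 := by
    intro n hn
    apply hinj
    have h := hmul n x₁
    rw [hn x₁, hx₁, mul_one, hφ0] at h
    rw [hφ0]
    exact h.symm
  have annR : ∀ n : Tri A M B, (∀ x, x * n = 0) → n = 0 := by
    intro n hn
    apply hinj
    have h := hmul x₁ n
    rw [hn x₁, hx₁, one_mul, hφ0] at h
    rw [hφ0]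
    exact h.symm
  -- L2 : row pairs
  have L2 : ∀ (a : A) (m : M),
      φ (Tri.e11 a + Tri.e12 m) = φ (Tri.e11 a) + φ (Tri.e12 m) := by
    intro a m
    obtain ⟨t, ht⟩ := hsurj (φ (Tri.e11 a) + φ (Tri.e12 m))
    have h1 : ∀ a'' : A, t * Tri.e11 a'' = Tri.e11 (a * a'') := by
      intro a''; apply hinj
      rw [hmul, ht, add_mul, ← hmul, ← hmul, pAA, pMA, hφ0, add_zero]
    have h2 : ∀ m'' : M, t * Tri.e12 m'' = Tri.e12 (a • m'') := by
      intro m''; apply hinj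
      rw [hmul, ht, add_mul, ← hmul, ← hmul, pAM, pMM, hφ0, add_zero]
    have h3 : ∀ b' : B, t * Tri.e22 b' = Tri.e12 (MulOpposite.op b' • m) := by
      intro b'; apply hinj
      rw [hmul, ht, add_mul, ← hmul, ← hmul, pAB, pMB, hφ0, zero_add]
    have ca : ∀ a'' : A, t.a * a'' = a * a'' := by
      intro a''
      have h := congrArg Tri.a (h1 a'')
      simpa using h
    have cm : ∀ m'' : M, t.a • m'' = a • m'' := by
      intro m''
      have h := congrArg Tri.m (h2 m'')
      simpa [hA0, h0A, hB0, h0B] using h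
    have cmb : ∀ b' : B, MulOpposite.op b' • t.m = MulOpposite.op b' • m := by
      intro b'
      have h := congrArg Tri.m (h3 b')
      simpa [hA0, h0A, hB0, h0B] using h
    have cb : ∀ b' : B, t.b * b' = 0 := by
      intro b'
      have h := congrArg Tri.b (h3 b')
      simpa using h
    have key : t = Tri.e11 a + Tri.e12 m := by
      have hn : ∀ x : Tri A M B, (t - (Tri.e11 a + Tri.e12 m)) * x = 0 := by
        intro x
        ext
        · simp [sub_mul, ca]
        · simp [hsubA, hBsubM, cm, cmb]
        · simp [sub_mul, cb]
      exact sub_eq_zero.mp (annL _ hn)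
    rw [← key, ht]
  -- L3 : column pairs
  have L3 : ∀ (m : M) (b : B),
      φ (Tri.e12 m + Tri.e22 b) = φ (Tri.e12 m) + φ (Tri.e22 b) := by
    intro m b
    obtain ⟨t, ht⟩ := hsurj (φ (Tri.e12 m) + φ (Tri.e22 b))
    have k1 : ∀ a' : A, Tri.e11 a' * t = Tri.e12 (a' • m) := by
      intro a'; apply hinj
      rw [hmul, ht, mul_add, ← hmul, ← hmul, pAM, pAB, hφ0, add_zero]
    have k2 : ∀ m'' : M, Tri.e12 m'' * t = Tri.e12 (MulOpposite.op b • m'') := by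
      intro m''; apply hinj
      rw [hmul, ht, mul_add, ← hmul, ← hmul, pMM, pMB, hφ0, zero_add]
    have k3 : ∀ b'' : B, Tri.e22 b'' * t = Tri.e22 (b'' * b) := by
      intro b''; apply hinj
      rw [hmul, ht, mul_add, ← hmul, ← hmul, pBM, pBB, hφ0, zero_add]
    have ca : ∀ a' : A, a' * t.a = 0 := by
      intro a'
      have h := congrArg Tri.a (k1 a')
      simpa using h
    have cm : ∀ a' : A, a' • t.m = a' • m := by
      intro a'
      have h := congrArg Tri.m (k1 a')
      simpa [hA0, h0A, hB0, h0B] using h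
    have cmb : ∀ m'' : M, MulOpposite.op t.b • m'' = MulOpposite.op b • m'' := by
      intro m''
      have h := congrArg Tri.m (k2 m'')
      simpa [hA0, h0A, hB0, h0B] using h
    have cb : ∀ b'' : B, b'' * t.b = b'' * b := by
      intro b''
      have h := congrArg Tri.b (k3 b'')
      simpa using h
    have key : t = Tri.e12 m + Tri.e22 b := by
      have hn : ∀ x : Tri A M B, x * (t - (Tri.e12 m + Tri.e22 b)) = 0 := by
        intro x
        ext
        · simp [mul_sub, ca]
        · simp [hAsubM, hsubB, cm, cmb]
        · simp [mul_sub, cb]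
      exact sub_eq_zero.mp (annR _ hn)
    rw [← key, ht]
  -- L4a : mixed pairs (A•M, M•B)
  have L4a : ∀ (a : A) (m μ : M) (b : B),
      φ (Tri.e12 (a • m + MulOpposite.op b • μ)) =
        φ (Tri.e12 (a • m)) + φ (Tri.e12 (MulOpposite.op b • μ)) := by
    intro a m μ b
    have key : (Tri.e11 a + Tri.e12 μ) * (Tri.e12 m + Tri.e22 b)
        = (Tri.e12 (a • m + MulOpposite.op b • μ) : Tri A M B) := by
      ext <;> simp [hA0, h0A, hB0, h0B]
    rw [← key, hmul, L2, L3, add_mul, mul_add, mul_add,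
       ← hmul, ← hmul, ← hmul, ← hmul, pAM, pAB, pMM, pMB, hφ0, add_zero, zero_add]
  -- L4b : same-a pairs in M
  have L4b : ∀ (a : A) (m m' : M),
      φ (Tri.e12 (a • m + a • m')) = φ (Tri.e12 (a • m)) + φ (Tri.e12 (a • m')) := by
    intro a m m'
    obtain ⟨t, ht⟩ := hsurj (φ (Tri.e12 (a • m)) + φ (Tri.e12 (a • m')))
    have h1 : ∀ a'' : A, t * Tri.e11 a'' = 0 := by
      intro a''; apply hinj
      rw [hmul, ht, add_mul, ← hmul, ← hmul, pMA, pMA, hφ0, add_zero]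
    have h2 : ∀ m'' : M, t * Tri.e12 m'' = 0 := by
      intro m''; apply hinj
      rw [hmul, ht, add_mul, ← hmul, ← hmul, pMM, pMM, hφ0, add_zero]
    have h3 : ∀ b' : B,
        t * Tri.e22 b' = Tri.e12 (MulOpposite.op b' • (a • m + a • m')) := by
      intro b'; apply hinj
      rw [hmul, ht, add_mul, ← hmul, ← hmul, pMB, pMB]
      rw [show MulOpposite.op b' • (a • m) = a • (MulOpposite.op b' • m) from (ssc _ _ _).symm]
      rw [← L4a a (MulOpposite.op b' • m) (a • m') b']
      congr 2
      rw [ssc, ← saR]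
    have ca : ∀ a'' : A, t.a * a'' = 0 := by
      intro a''
      have h := congrArg Tri.a (h1 a'')
      simpa using h
    have cam : ∀ m'' : M, t.a • m'' = 0 := by
      intro m''
      have h := congrArg Tri.m (h2 m'')
      simpa [hA0, h0A, hB0, h0B] using h
    have cmb : ∀ b' : B,
        MulOpposite.op b' • t.m = MulOpposite.op b' • (a • m + a • m') := by
      intro b'
      have h := congrArg Tri.m (h3 b')
      simpa [hA0, h0A, hB0, h0B] using h
    have cb : ∀ b' : B, t.b * b' = 0 := by
      intro b'
      have h := congrArg Tri.b (h3 b')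
      simpa using h
    have key : t = Tri.e12 (a • m + a • m') := by
      have hn : ∀ x : Tri A M B, (t - Tri.e12 (a • m + a • m')) * x = 0 := by
        intro x
        ext
        · simp [sub_mul, ca]
        · simp [hsubA, hBsubM, cam, cmb]
        · simp [sub_mul, cb]
      exact sub_eq_zero.mp (annL _ hn)
    rw [← key, ht]
  -- L4c : same-b pairs in M
  have L4c : ∀ (b : B) (m m' : M),
      φ (Tri.e12 (MulOpposite.op b • m + MulOpposite.op b • m')) =
        φ (Tri.e12 (MulOpposite.op b • m)) + φ (Tri.e12 (MulOpposite.op b • m')) := by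
    intro b m m'
    obtain ⟨t, ht⟩ :=
      hsurj (φ (Tri.e12 (MulOpposite.op b • m)) + φ (Tri.e12 (MulOpposite.op b • m')))
    have k1 : ∀ a' : A,
        Tri.e11 a' * t = Tri.e12 (a' • (MulOpposite.op b • m + MulOpposite.op b • m')) := by
      intro a'; apply hinj
      rw [hmul, ht, mul_add, ← hmul, ← hmul, pAM, pAM]
      rw [show a' • (MulOpposite.op b • m') = MulOpposite.op b • (a' • m') from ssc _ _ _]
      rw [← L4a a' (MulOpposite.op b • m) (a' • m') b]
      congr 2
      rw [show MulOpposite.op b • (a' • m') = a' • (MulOpposite.op b • m') from (ssc _ _ _).symm]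
      rw [← saL]
    have k2 : ∀ m'' : M, Tri.e12 m'' * t = 0 := by
      intro m''; apply hinj
      rw [hmul, ht, mul_add, ← hmul, ← hmul, pMM, pMM, hφ0, add_zero]
    have k3 : ∀ b'' : B, Tri.e22 b'' * t = 0 := by
      intro b''; apply hinj
      rw [hmul, ht, mul_add, ← hmul, ← hmul, pBM, pBM, hφ0, add_zero]
    have ca : ∀ a' : A, a' * t.a = 0 := by
      intro a'
      have h := congrArg Tri.a (k1 a')
      simpa using h
    have cm : ∀ a' : A,
        a' • t.m = a' • (MulOpposite.op b • m + MulOpposite.op b • m') := by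
      intro a'
      have h := congrArg Tri.m (k1 a')
      simpa [hA0, h0A, hB0, h0B] using h
    have cmb : ∀ m'' : M, MulOpposite.op t.b • m'' = 0 := by
      intro m''
      have h := congrArg Tri.m (k2 m'')
      simpa [hA0, h0A, hB0, h0B] using h
    have cb : ∀ b'' : B, b'' * t.b = 0 := by
      intro b''
      have h := congrArg Tri.b (k3 b'')
      simpa using h
    have key : t = Tri.e12 (MulOpposite.op b • m + MulOpposite.op b • m') := by
      have hn : ∀ x : Tri A M B,
          x * (t - Tri.e12 (MulOpposite.op b • m + MulOpposite.op b • m')) = 0 := by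
        intro x
        ext
        · simp [mul_sub, ca]
        · simp [hAsubM, hsubB, cm, cmb]
        · simp [mul_sub, cb]
      exact sub_eq_zero.mp (annR _ hn)
    rw [← key, ht]
  -- L4 : additivity on M
  have L4 : ∀ (m m' : M), φ (Tri.e12 (m + m')) = φ (Tri.e12 m) + φ (Tri.e12 m') := by
    intro m m'
    obtain ⟨t, ht⟩ := hsurj (φ (Tri.e12 m) + φ (Tri.e12 m'))
    have h1 : ∀ a'' : A, t * Tri.e11 a'' = 0 := by
      intro a''; apply hinj
      rw [hmul, ht, add_mul, ← hmul, ← hmul, pMA, pMA, hφ0, add_zero]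
    have h2 : ∀ m'' : M, t * Tri.e12 m'' = 0 := by
      intro m''; apply hinj
      rw [hmul, ht, add_mul, ← hmul, ← hmul, pMM, pMM, hφ0, add_zero]
    have h3 : ∀ b' : B, t * Tri.e22 b' = Tri.e12 (MulOpposite.op b' • (m + m')) := by
      intro b'; apply hinj
      rw [hmul, ht, add_mul, ← hmul, ← hmul, pMB, pMB, ← L4c b' m m']
      congr 2
      rw [← saR]
    have ca : ∀ a'' : A, t.a * a'' = 0 := by
      intro a''
      have h := congrArg Tri.a (h1 a'')
      simpa using h
    have cam : ∀ m'' : M, t.a • m'' = 0 := by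
      intro m''
      have h := congrArg Tri.m (h2 m'')
      simpa [hA0, h0A, hB0, h0B] using h
    have cmb : ∀ b' : B, MulOpposite.op b' • t.m = MulOpposite.op b' • (m + m') := by
      intro b'
      have h := congrArg Tri.m (h3 b')
      simpa [hA0, h0A, hB0, h0B] using h
    have cb : ∀ b' : B, t.b * b' = 0 := by
      intro b'
      have h := congrArg Tri.b (h3 b')
      simpa using h
    have key : t = Tri.e12 (m + m') := by
      have hn : ∀ x : Tri A M B, (t - Tri.e12 (m + m')) * x = 0 := by
        intro x
        ext
        · simp [sub_mul, ca]
        · simp [hsubA, hBsubM, cam, cmb]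
        · simp [sub_mul, cb]
      exact sub_eq_zero.mp (annL _ hn)
    rw [← key, ht]
  -- L6 : additivity on A
  have L6 : ∀ (a a' : A), φ (Tri.e11 (a + a')) = φ (Tri.e11 a) + φ (Tri.e11 a') := by
    intro a a'
    obtain ⟨t, ht⟩ := hsurj (φ (Tri.e11 a) + φ (Tri.e11 a'))
    have h2 : ∀ m'' : M, t * Tri.e12 m'' = Tri.e12 ((a + a') • m'') := by
      intro m''; apply hinj
      rw [hmul, ht, add_mul, ← hmul, ← hmul, pAM, pAM, ← L4 (a • m'') (a' • m'')]
      congr 2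
      rw [← asL]
    have h3 : ∀ b' : B, t * Tri.e22 b' = 0 := by
      intro b'; apply hinj
      rw [hmul, ht, add_mul, ← hmul, ← hmul, pAB, pAB, hφ0, add_zero]
    have cam : ∀ m'' : M, t.a • m'' = (a + a') • m'' := by
      intro m''
      have h := congrArg Tri.m (h2 m'')
      simpa [hA0, h0A, hB0, h0B] using h
    have cta : t.a = a + a' := by
      have h : ∀ m'' : M, (t.a - (a + a')) • m'' = 0 := by
        intro m''
        rw [hsubA, cam, sub_self]
      exact sub_eq_zero.mp (hfaithA _ h)
    have cmb : ∀ b' : B, MulOpposite.op b' • t.m = 0 := by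
      intro b'
      have h := congrArg Tri.m (h3 b')
      simpa [hA0, h0A, hB0, h0B] using h
    have cb : ∀ b' : B, t.b * b' = 0 := by
      intro b'
      have h := congrArg Tri.b (h3 b')
      simpa using h
    have key : t = Tri.e11 (a + a') := by
      have hn : ∀ x : Tri A M B, (t - Tri.e11 (a + a')) * x = 0 := by
        intro x
        ext
        · simp [sub_mul, cta]
        · simp [hsubA, hBsubM, cta, cmb, h0A]
        · simp [sub_mul, cb]
      exact sub_eq_zero.mp (annL _ hn)
    rw [← key, ht]
  -- L7 : additivity on B
  have L7 : ∀ (b b' : B), φ (Tri.e22 (b + b')) = φ (Tri.e22 b) + φ (Tri.e22 b') := by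
    intro b b'
    obtain ⟨t, ht⟩ := hsurj (φ (Tri.e22 b) + φ (Tri.e22 b'))
    have k2 : ∀ m'' : M, Tri.e12 m'' * t = Tri.e12 (MulOpposite.op (b + b') • m'') := by
      intro m''; apply hinj
      rw [hmul, ht, mul_add, ← hmul, ← hmul, pMB, pMB,
        ← L4 (MulOpposite.op b • m'') (MulOpposite.op b' • m'')]
      congr 2
      rw [MulOpposite.op_add, asR]
    have k1 : ∀ a' : A, Tri.e11 a' * t = 0 := by
      intro a'; apply hinj
      rw [hmul, ht, mul_add, ← hmul, ← hmul, pAB, pAB, hφ0, add_zero]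
    have cbm : ∀ m'' : M, MulOpposite.op t.b • m'' = MulOpposite.op (b + b') • m'' := by
      intro m''
      have h := congrArg Tri.m (k2 m'')
      simpa [hA0, h0A, hB0, h0B] using h
    have ctb : t.b = b + b' := by
      have h : ∀ m'' : M, MulOpposite.op (t.b - (b + b')) • m'' = 0 := by
        intro m''
        rw [MulOpposite.op_sub, hsubB, cbm, sub_self]
      have h2 := hfaithB (MulOpposite.op (t.b - (b + b'))) h
      rw [MulOpposite.op_eq_zero_iff] at h2
      exact sub_eq_zero.mp h2
    have ca : ∀ a' : A, a' * t.a = 0 := by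
      intro a'
      have h := congrArg Tri.a (k1 a')
      simpa using h
    have cm : ∀ a' : A, a' • t.m = 0 := by
      intro a'
      have h := congrArg Tri.m (k1 a')
      simpa [hA0, h0A, hB0, h0B] using h
    have key : t = Tri.e22 (b + b') := by
      have hn : ∀ x : Tri A M B, x * (t - Tri.e22 (b + b')) = 0 := by
        intro x
        ext
        · simp [mul_sub, ca]
        · simp [hAsubM, hsubB, cm, ctb, h0B]
        · simp [mul_sub, ctb]
      exact sub_eq_zero.mp (annR _ hn)
    rw [← key, ht]
  -- L8 : Peirce decomposition of φ
  have L8 : ∀ (a : A) (m : M) (b : B),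
      φ (⟨a, m, b⟩ : Tri A M B) = φ (Tri.e11 a) + φ (Tri.e12 m) + φ (Tri.e22 b) := by
    intro a m b
    obtain ⟨t, ht⟩ := hsurj (φ (Tri.e11 a) + φ (Tri.e12 m) + φ (Tri.e22 b))
    have h1 : ∀ a'' : A, t * Tri.e11 a'' = Tri.e11 (a * a'') := by
      intro a''; apply hinj
      rw [hmul, ht, add_mul, add_mul, ← hmul, ← hmul, ← hmul, pAA, pMA, pBA, hφ0,
        add_zero, add_zero]
    have h2 : ∀ m'' : M, t * Tri.e12 m'' = Tri.e12 (a • m'') := by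
      intro m''; apply hinj
      rw [hmul, ht, add_mul, add_mul, ← hmul, ← hmul, ← hmul, pAM, pMM, pBM, hφ0,
        add_zero, add_zero]
    have h3 : ∀ b' : B,
        t * Tri.e22 b' = (⟨0, MulOpposite.op b' • m, b * b'⟩ : Tri A M B) := by
      intro b'; apply hinj
      rw [hmul, ht, add_mul, add_mul, ← hmul, ← hmul, ← hmul, pAB, pMB, pBB, hφ0, zero_add,
        ← L3 (MulOpposite.op b' • m) (b * b')]
      congr 1
      ext <;> simp
    have ca : ∀ a'' : A, t.a * a'' = a * a'' := by
      intro a''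
      have h := congrArg Tri.a (h1 a'')
      simpa using h
    have cam : ∀ m'' : M, t.a • m'' = a • m'' := by
      intro m''
      have h := congrArg Tri.m (h2 m'')
      simpa [hA0, h0A, hB0, h0B] using h
    have cmb : ∀ b' : B, MulOpposite.op b' • t.m = MulOpposite.op b' • m := by
      intro b'
      have h := congrArg Tri.m (h3 b')
      simpa [hA0, h0A, hB0, h0B] using h
    have cb : ∀ b' : B, t.b * b' = b * b' := by
      intro b'
      have h := congrArg Tri.b (h3 b')
      simpa using h
    have key : t = (⟨a, m, b⟩ : Tri A M B) := by
      have hn : ∀ x : Tri A M B, (t - ⟨a, m, b⟩) * x = 0 := by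
        intro x
        ext
        · simp [sub_mul, ca]
        · simp [hsubA, hBsubM, cam, cmb]
        · simp [sub_mul, cb]
      exact sub_eq_zero.mp (annL _ hn)
    rw [← key, ht]
  -- conclusion
  intro s t
  have hs : φ s = φ (Tri.e11 s.a) + φ (Tri.e12 s.m) + φ (Tri.e22 s.b) := L8 s.a s.m s.b
  have ht : φ t = φ (Tri.e11 t.a) + φ (Tri.e12 t.m) + φ (Tri.e22 t.b) := L8 t.a t.m t.b
  have hst : φ (s + t) =
      φ (Tri.e11 (s.a + t.a)) + φ (Tri.e12 (s.m + t.m)) + φ (Tri.e22 (s.b + t.b)) :=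
    L8 (s.a + t.a) (s.m + t.m) (s.b + t.b)
  rw [hst, L6, L4, L7, hs, ht]
  abel

end Generic


theorem mult_bijective_additive_standardOperatorAlgebras
    {𝕜 X : Type*} [RCLike 𝕜]
    [NormedAddCommGroup X] [NormedSpace 𝕜 X] [CompleteSpace X]
    (A B : NonUnitalSubalgebra 𝕜 (X →L[𝕜] X))
    (hstdA : ∀ T : X →L[𝕜] X, Module.Finite 𝕜 (LinearMap.range (T : X →ₗ[𝕜] X)) → T ∈ A)
    (hstdB : ∀ T : X →L[𝕜] X, Module.Finite 𝕜 (LinearMap.range (T : X →ₗ[𝕜] X)) → T ∈ B)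
    {M R' : Type*} [AddCommGroup M] [Module 𝕜 M]
    [SMul A M] [SMul (↥B)ᵐᵒᵖ M] [TriBimodule 𝕜 A M B]
    (hfaithA : ∀ a : A, (∀ m : M, a • m = 0) → a = 0)
    (hfaithB : ∀ b : B, (∀ m : M, MulOpposite.op b • m = 0) → b = 0)
    [Ring R'] (φ : Tri (↥A) M (↥B) → R')
    (hbij : Function.Bijective φ)
    (hmul : ∀ x y : Tri (↥A) M (↥B), φ (x * y) = φ x * φ y) :
    ∀ s t : Tri (↥A) M (↥B), φ (s + t) = φ s + φ t := by
  have bm : TriBimodule 𝕜 (↥A) M (↥B) := inferInstance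
  refine Tri.mult_bijective_additive_generic
    bm.smul_add_left bm.add_smul_left bm.smul_add_right bm.add_smul_right
    bm.smul_smul_comm hfaithA ?_ φ hbij.1 hbij.2 hmul
  intro b hb
  have h := hfaithB b.unop (fun m => by simpa using hb m)
  rw [← MulOpposite.op_unop b, h, MulOpposite.op_zero]
end

section
/- Let φ be a multiplicative bijective map from the triangular algebra T = Tri(A,M,B) onto an arbitrary ring R', where A satisfies (i) and B satisfies (ii). Then for any a11 ∈ T11, b12, c12 ∈ T12, and d22 ∈ T22, φ(a11·b12 + c12·d22) = φ(a11·b12) + φ(c12·d22). -/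
theorem mult_add_e11_mul_e12_e12_mul_e22
    {R A M B R' : Type*} [CommRing R]
    [NonUnitalRing A] [NonUnitalRing B] [AddCommGroup M]
    [Module R A] [Module R B] [Module R M]
    [SMulCommClass R A A] [IsScalarTower R A A]
    [SMulCommClass R B B] [IsScalarTower R B B]
    [SMul A M] [SMul Bᵐᵒᵖ M] [TriBimodule R A M B]
    (hfaithA : ∀ a : A, (∀ m : M, a • m = 0) → a = 0)
    (hfaithB : ∀ b : B, (∀ m : M, MulOpposite.op b • m = 0) → b = 0)
    (hA₁ : ∀ a : A, (∀ x : A, a * x = 0) → a = 0)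
    (hA₂ : ∀ a : A, (∀ x : A, x * a = 0) → a = 0)
    (hB₁ : ∀ b : B, (∀ y : B, b * y = 0) → b = 0)
    (hB₂ : ∀ b : B, (∀ y : B, y * b = 0) → b = 0)
    [Ring R'] (φ : Tri A M B → R')
    (hbij : Function.Bijective φ)
    (hmul : ∀ x y : Tri A M B, φ (x * y) = φ x * φ y) :
    ∀ (a : A) (m m' : M) (b : B), φ ((Tri.e11 a : Tri A M B) * Tri.e12 m + Tri.e12 m' * Tri.e22 b) = φ ((Tri.e11 a : Tri A M B) * Tri.e12 m) + φ ((Tri.e12 m' : Tri A M B) * Tri.e22 b) := by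

  intro a m m' b
  obtain ⟨hinj, hsurj⟩ := hbij
  -- component formulas for multiplication
  have ma : ∀ x y : Tri A M B, (x*y).a = x.a * y.a := fun _ _ => rfl
  have mm : ∀ x y : Tri A M B, (x*y).m = x.a • y.m + MulOpposite.op y.b • x.m := fun _ _ => rfl
  have mb : ∀ x y : Tri A M B, (x*y).b = x.b * y.b := fun _ _ => rfl
  -- zero-smul facts
  have sA0 : ∀ n : M, (0:A) • n = 0 := by
    intro n
    have h := TriBimodule.add_smul_left (R := R) (A := A) (M := M) (B := B) (0:A) (0:A) n
    rw [add_zero] at h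
    exact add_eq_left.mp h.symm
  have sA0' : ∀ x : A, x • (0:M) = 0 := by
    intro x
    have h := TriBimodule.smul_add_left (R := R) (A := A) (M := M) (B := B) x (0:M) 0
    rw [add_zero] at h
    exact add_eq_left.mp h.symm
  have sB0 : ∀ n : M, (0:Bᵐᵒᵖ) • n = 0 := by
    intro n
    have h := TriBimodule.add_smul_right (R := R) (A := A) (M := M) (B := B) (0:Bᵐᵒᵖ) (0:Bᵐᵒᵖ) n
    rw [add_zero] at h
    exact add_eq_left.mp h.symm
  have sB0' : ∀ y : Bᵐᵒᵖ, y • (0:M) = 0 := by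
    intro y
    have h := TriBimodule.smul_add_right (R := R) (A := A) (M := M) (B := B) y (0:M) 0
    rw [add_zero] at h
    exact add_eq_left.mp h.symm
  -- φ 0 = 0
  have hzero : φ 0 = 0 := by
    obtain ⟨z, hz⟩ := hsurj 0
    have h00 : (0 : Tri A M B) * z = 0 := by
      ext
      · simp [ma]
      · simp [mm, sA0, sB0']
      · simp [mb]
    calc φ 0 = φ ((0 : Tri A M B) * z) := by rw [h00]
      _ = φ 0 * φ z := hmul _ _
      _ = φ 0 * 0 := by rw [hz]
      _ = 0 := mul_zero _
  -- the preimage of 1 is a left identity of T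
  obtain ⟨w, hw⟩ := hsurj 1
  have hwl : ∀ z : Tri A M B, w * z = z := by
    intro z
    apply hinj
    rw [hmul, hw, one_mul]
  have idM : ∀ n : M, w.a • n = n := by
    intro n
    have h := congrArg Tri.m (hwl (Tri.e12 n))
    simp only [mm, Tri.e12] at h
    rwa [MulOpposite.op_zero, sB0, add_zero] at h
  -- Lemma: additivity on T12 + T22 pairs
  have lemL : ∀ (n : M) (y : B),
      φ (Tri.e12 n + Tri.e22 y) = φ (Tri.e12 n) + φ (Tri.e22 y) := by
    intro n y
    obtain ⟨t, ht⟩ := hsurj (φ (Tri.e12 n) + φ (Tri.e22 y))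
    have hta : t.a = 0 := by
      apply hA₁
      intro x
      have p1 : (Tri.e12 n : Tri A M B) * Tri.e11 x = 0 := by
        ext <;> simp [ma, mm, mb, Tri.e11, Tri.e12, sA0, sA0', sB0, sB0']
      have p2 : (Tri.e22 y : Tri A M B) * Tri.e11 x = 0 := by
        ext <;> simp [ma, mm, mb, Tri.e11, Tri.e22, sA0, sA0', sB0, sB0']
      have h : φ (t * Tri.e11 x) = φ 0 := by
        rw [hmul, ht, add_mul, ← hmul, ← hmul, p1, p2, hzero, add_zero]
      have h2 := hinj h
      have h3 := congrArg Tri.a h2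
      simpa [ma, Tri.e11] using h3
    have htb : t.b = y := by
      have hz : ∀ z : B, z * (t.b - y) = 0 := by
        intro z
        have p4 : (Tri.e22 z : Tri A M B) * Tri.e12 n = 0 := by
          ext <;> simp [ma, mm, mb, Tri.e22, Tri.e12, sA0, sA0', sB0, sB0']
        have p5 : (Tri.e22 z : Tri A M B) * Tri.e22 y = Tri.e22 (z * y) := by
          ext <;> simp [ma, mm, mb, Tri.e22, sA0, sA0', sB0, sB0']
        have p6 : (Tri.e22 z : Tri A M B) * t = Tri.e22 (z * t.b) := by
          ext <;> simp [ma, mm, mb, Tri.e22, sA0, sA0', sB0, sB0']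
        have h : φ ((Tri.e22 z : Tri A M B) * t) = φ (Tri.e22 (z * y)) := by
          rw [hmul, ht, mul_add, ← hmul, ← hmul, p4, p5, hzero, zero_add]
        have h2 := hinj h
        rw [p6] at h2
        have h3 := congrArg Tri.b h2
        simp only [Tri.e22] at h3
        rw [mul_sub, h3, sub_self]
      exact sub_eq_zero.mp (hB₂ _ hz)
    have htm : t.m = n := by
      have p8 : (Tri.e11 w.a : Tri A M B) * Tri.e12 n = Tri.e12 n := by
        ext <;> simp [ma, mm, mb, Tri.e11, Tri.e12, sA0, sA0', sB0, sB0', idM]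
      have p9 : (Tri.e11 w.a : Tri A M B) * Tri.e22 y = 0 := by
        ext <;> simp [ma, mm, mb, Tri.e11, Tri.e22, sA0, sA0', sB0, sB0']
      have p7 : (Tri.e11 w.a : Tri A M B) * t = Tri.e12 t.m := by
        ext <;> simp [ma, mm, mb, Tri.e11, Tri.e12, hta, htb, sA0, sA0', sB0, sB0', idM]
      have h : φ ((Tri.e11 w.a : Tri A M B) * t) = φ (Tri.e12 n) := by
        rw [hmul, ht, mul_add, ← hmul, ← hmul, p8, p9, hzero, add_zero]
      have h2 := hinj h
      rw [p7] at h2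
      have h3 := congrArg Tri.m h2
      simpa [Tri.e12] using h3
    have hteq : t = Tri.e12 n + Tri.e22 y := by
      ext
      · simp [hta, Tri.e12, Tri.e22]
      · simp [htm, Tri.e12, Tri.e22]
      · simp [htb, Tri.e12, Tri.e22]
    rw [← hteq, ht]
  -- main computation via the factorization
  have key : Tri.e11 a * Tri.e12 m + Tri.e12 m' * Tri.e22 b
      = (⟨a, m', 0⟩ : Tri A M B) * ⟨0, m, b⟩ := by
    ext <;> simp [ma, mm, mb, Tri.e11, Tri.e12, Tri.e22, sA0, sA0', sB0, sB0']
  have hQ : (⟨0, m, b⟩ : Tri A M B) = Tri.e12 m + Tri.e22 b := by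
    ext <;> simp [Tri.e12, Tri.e22]
  have hPm : (⟨a, m', 0⟩ : Tri A M B) * Tri.e12 m = Tri.e11 a * Tri.e12 m := by
    ext <;> simp [ma, mm, mb, Tri.e11, Tri.e12, sA0, sA0', sB0, sB0']
  have hPb : (⟨a, m', 0⟩ : Tri A M B) * Tri.e22 b = Tri.e12 m' * Tri.e22 b := by
    ext <;> simp [ma, mm, mb, Tri.e12, Tri.e22, sA0, sA0', sB0, sB0']
  calc φ (Tri.e11 a * Tri.e12 m + Tri.e12 m' * Tri.e22 b)
      = φ ((⟨a, m', 0⟩ : Tri A M B) * ⟨0, m, b⟩) := by rw [key]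
    _ = φ (⟨a, m', 0⟩ : Tri A M B) * φ (⟨0, m, b⟩ : Tri A M B) := hmul _ _
    _ = φ (⟨a, m', 0⟩ : Tri A M B) * (φ (Tri.e12 m) + φ (Tri.e22 b)) := by rw [hQ, lemL]
    _ = φ (⟨a, m', 0⟩ : Tri A M B) * φ (Tri.e12 m)
        + φ (⟨a, m', 0⟩ : Tri A M B) * φ (Tri.e22 b) := mul_add _ _ _
    _ = φ ((⟨a, m', 0⟩ : Tri A M B) * Tri.e12 m)
        + φ ((⟨a, m', 0⟩ : Tri A M B) * Tri.e22 b) := by rw [hmul, hmul]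
    _ = _ := by rw [hPm, hPb]
end

section
/- Let φ be a multiplicative bijective map from the triangular algebra T = Tri(A,M,B) onto an arbitrary ring R', where A satisfies (i) and B satisfies (ii). Then φ is additive on T12: for all a12, b12 ∈ T12, φ(a12 + b12) = φ(a12) + φ(b12). -/
theorem mult_additive_on_T12
    {R A M B R' : Type*} [CommRing R]
    [NonUnitalRing A] [NonUnitalRing B] [AddCommGroup M]
    [Module R A] [Module R B] [Module R M]
    [SMulCommClass R A A] [IsScalarTower R A A]
    [SMulCommClass R B B] [IsScalarTower R B B]
    [SMul A M] [SMul Bᵐᵒᵖ M] [TriBimodule R A M B]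
    (hfaithA : ∀ a : A, (∀ m : M, a • m = 0) → a = 0)
    (hfaithB : ∀ b : B, (∀ m : M, MulOpposite.op b • m = 0) → b = 0)
    (hA₁ : ∀ a : A, (∀ x : A, a * x = 0) → a = 0)
    (hA₂ : ∀ a : A, (∀ x : A, x * a = 0) → a = 0)
    (hB₁ : ∀ b : B, (∀ y : B, b * y = 0) → b = 0)
    (hB₂ : ∀ b : B, (∀ y : B, y * b = 0) → b = 0)
    [Ring R'] (φ : Tri A M B → R')
    (hbij : Function.Bijective φ)
    (hmul : ∀ x y : Tri A M B, φ (x * y) = φ x * φ y) :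
    ∀ m m' : M, φ ((Tri.e12 m : Tri A M B) + Tri.e12 m') = φ (Tri.e12 m) + φ (Tri.e12 m') := by
  intro m m'
  obtain ⟨hinj, hsurj⟩ := hbij
  -- cancellation helper
  have cancelM : ∀ {x : M}, x = x + x → x = 0 := by
    intro x h
    have h2 : x + 0 = x + x := by rw [add_zero]; exact h
    exact (add_left_cancel h2).symm
  -- basic smul facts
  have hAdd : ∀ (a : A) (u v : M), a • (u + v) = a • u + a • v :=
    TriBimodule.smul_add_left (R := R) (B := B)
  have hMulL : ∀ (a a' : A) (u : M), (a * a') • u = a • (a' • u) :=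
    TriBimodule.mul_smul_left (R := R) (B := B)
  have hComm : ∀ (a : A) (b : Bᵐᵒᵖ) (u : M), a • (b • u) = b • (a • u) :=
    TriBimodule.smul_smul_comm (R := R)
  have hza : ∀ u : M, (0 : A) • u = 0 := by
    intro u
    have h := TriBimodule.add_smul_left (R := R) (B := B) (0 : A) 0 u
    rw [add_zero] at h
    exact cancelM h
  have haz : ∀ a : A, a • (0 : M) = 0 := by
    intro a
    have h := hAdd a 0 0
    rw [add_zero] at h
    exact cancelM h
  have hzb : ∀ u : M, (0 : Bᵐᵒᵖ) • u = 0 := by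
    intro u
    have h := TriBimodule.add_smul_right (R := R) (A := A) (0 : Bᵐᵒᵖ) 0 u
    rw [add_zero] at h
    exact cancelM h
  have hbz : ∀ b : Bᵐᵒᵖ, b • (0 : M) = 0 := by
    intro b
    have h := TriBimodule.smul_add_right (R := R) (A := A) b (0 : M) 0
    rw [add_zero] at h
    exact cancelM h
  -- component lemmas for multiplication
  have mulc : ∀ (a a' : A) (u u' : M) (b b' : B),
      (⟨a, u, b⟩ * ⟨a', u', b'⟩ : Tri A M B)
        = ⟨a * a', a • u' + MulOpposite.op b' • u, b * b'⟩ := fun _ _ _ _ _ _ => rfl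
  -- φ 0 = 0
  have hzmul : ∀ x : Tri A M B, (0 : Tri A M B) * x = 0 := by
    intro x
    obtain ⟨a', u', b'⟩ := x
    show (⟨0,0,0⟩ * ⟨a', u', b'⟩ : Tri A M B) = ⟨0,0,0⟩
    rw [mulc]
    ext <;> simp [haz, hbz, hza]
  have h0 : φ 0 = 0 := by
    obtain ⟨z0, hz0⟩ := hsurj 0
    have h := hmul 0 z0
    rw [hzmul, hz0, mul_zero] at h
    exact h
  -- the identity of T
  obtain ⟨e, he⟩ := hsurj 1
  have heL : ∀ x : Tri A M B, e * x = x := by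
    intro x; exact hinj (by rw [hmul, he, one_mul])
  have heR : ∀ x : Tri A M B, x * e = x := by
    intro x; exact hinj (by rw [hmul, he, mul_one])
  obtain ⟨ea, em, eb⟩ := e
  -- identity action facts
  have hea : ∀ u : M, ea • u = u := by
    intro u
    have h := heL ⟨0, u, 0⟩
    rw [mulc] at h
    have := congrArg Tri.m h
    simpa [hzb] using this
  have heb : ∀ u : M, MulOpposite.op eb • u = u := by
    intro u
    have h := heR ⟨0, u, 0⟩
    rw [mulc] at h
    have := congrArg Tri.m h
    simpa [hza, hbz, haz] using this
  have heaL : ∀ a : A, ea * a = a := by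
    intro a
    have h := heL ⟨a, 0, 0⟩
    rw [mulc] at h
    exact congrArg Tri.a h
  have hebL : ∀ b : B, eb * b = b := by
    intro b
    have h := heL ⟨0, 0, b⟩
    rw [mulc] at h
    exact congrArg Tri.b h
  -- Lemma 3 : additivity across the (1,2) and (2,2) corners
  have L3 : ∀ (u : M) (b : B),
      φ (⟨0, u, b⟩ : Tri A M B) = φ (⟨0, u, 0⟩ : Tri A M B) + φ (⟨0, 0, b⟩ : Tri A M B) := by
    intro u b
    obtain ⟨T, hT⟩ := hsurj (φ (⟨0, u, 0⟩ : Tri A M B) + φ (⟨0, 0, b⟩ : Tri A M B))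
    obtain ⟨p, q, r⟩ := T
    -- multiply on the left by e11 ea : pins p and q
    have h3 : (⟨ea, 0, 0⟩ * ⟨p, q, r⟩ : Tri A M B) = ⟨0, u, 0⟩ := by
      apply hinj
      rw [hmul, hT, mul_add, ← hmul, ← hmul]
      have e1 : (⟨ea, 0, 0⟩ * ⟨0, u, 0⟩ : Tri A M B) = ⟨0, u, 0⟩ := by
        rw [mulc]; ext <;> simp [hea, hbz]
      have e2 : (⟨ea, 0, 0⟩ * ⟨0, 0, b⟩ : Tri A M B) = 0 := by
        rw [mulc]; show (⟨_,_,_⟩ : Tri A M B) = ⟨0,0,0⟩; ext <;> simp [haz, hbz]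
      rw [e1, e2, h0, add_zero]
    -- multiply on the left by e22 eb : pins r
    have h2 : (⟨0, 0, eb⟩ * ⟨p, q, r⟩ : Tri A M B) = ⟨0, 0, b⟩ := by
      apply hinj
      rw [hmul, hT, mul_add, ← hmul, ← hmul]
      have e1 : (⟨0, 0, eb⟩ * ⟨0, u, 0⟩ : Tri A M B) = 0 := by
        rw [mulc]; show (⟨_,_,_⟩ : Tri A M B) = ⟨0,0,0⟩; ext <;> simp [hza, hbz]
      have e2 : (⟨0, 0, eb⟩ * ⟨0, 0, b⟩ : Tri A M B) = ⟨0, 0, b⟩ := by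
        rw [mulc]; ext <;> simp [hza, hbz, hebL]
      rw [e1, e2, h0, zero_add]
    rw [mulc] at h3 h2
    have hp : p = 0 := by
      have := congrArg Tri.a h3
      simpa [heaL] using this
    have hq : q = u := by
      have := congrArg Tri.m h3
      simpa [hea, hbz] using this
    have hr : r = b := by
      have := congrArg Tri.b h2
      simpa [hebL] using this
    rw [hp, hq, hr] at hT
    exact hT
  -- Lemma 2 : mixed additivity on the (1,2) corner
  have L2 : ∀ (a : A) (b : B) (u v : M),
      φ (⟨0, a • u + MulOpposite.op b • v, 0⟩ : Tri A M B)
        = φ (⟨0, a • u, 0⟩ : Tri A M B) + φ (⟨0, MulOpposite.op b • v, 0⟩ : Tri A M B) := by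
    intro a b u v
    have hXY : (⟨a, v, 0⟩ * ⟨0, u, b⟩ : Tri A M B) = ⟨0, a • u + MulOpposite.op b • v, 0⟩ := by
      rw [mulc]; ext <;> simp
    have hP : (⟨a, v, 0⟩ * ⟨0, u, 0⟩ : Tri A M B) = ⟨0, a • u, 0⟩ := by
      rw [mulc]; ext <;> simp [hzb]
    have hQ : (⟨a, v, 0⟩ * ⟨0, 0, b⟩ : Tri A M B) = ⟨0, MulOpposite.op b • v, 0⟩ := by
      rw [mulc]; ext <;> simp [haz]
    calc φ (⟨0, a • u + MulOpposite.op b • v, 0⟩ : Tri A M B)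
        = φ ((⟨a, v, 0⟩ : Tri A M B) * ⟨0, u, b⟩) := by rw [hXY]
      _ = φ (⟨a, v, 0⟩ : Tri A M B) * φ (⟨0, u, b⟩ : Tri A M B) := hmul _ _
      _ = φ (⟨a, v, 0⟩ : Tri A M B)
            * (φ (⟨0, u, 0⟩ : Tri A M B) + φ (⟨0, 0, b⟩ : Tri A M B)) := by rw [L3]
      _ = φ (⟨a, v, 0⟩ : Tri A M B) * φ (⟨0, u, 0⟩ : Tri A M B)
            + φ (⟨a, v, 0⟩ : Tri A M B) * φ (⟨0, 0, b⟩ : Tri A M B) := mul_add _ _ _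
      _ = φ ((⟨a, v, 0⟩ : Tri A M B) * ⟨0, u, 0⟩)
            + φ ((⟨a, v, 0⟩ : Tri A M B) * ⟨0, 0, b⟩) := by rw [hmul, hmul]
      _ = φ (⟨0, a • u, 0⟩ : Tri A M B) + φ (⟨0, MulOpposite.op b • v, 0⟩ : Tri A M B) := by
            rw [hP, hQ]
  -- conclusion
  have hsum : ((Tri.e12 m : Tri A M B) + Tri.e12 m') = (⟨0, m + m', 0⟩ : Tri A M B) := by
    ext <;> simp [Tri.e12]
  have h := L2 ea eb m m'
  rw [hea m, heb m'] at h
  rw [hsum]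
  exact h
end

section
/- Let φ be a bijective Jordan map from the triangular algebra T = Tri(A,M,B) onto an arbitrary ring R', where A satisfies (i') and B satisfies (ii'). Then for any a11 ∈ T11, b12, c12 ∈ T12, and d22 ∈ T22, φ(a11·b12 + c12·d22) = φ(a11·b12) + φ(c12·d22). -/
namespace TriAux

open Tri MulOpposite

variable {A M B : Type*} [NonUnitalRing A] [NonUnitalRing B] [AddCommGroup M]
  [SMul A M] [SMul Bᵐᵒᵖ M]

@[simp] theorem mul_a (x y : Tri A M B) : (x * y).a = x.a * y.a := rfl
@[simp] theorem mul_m (x y : Tri A M B) :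
    (x * y).m = x.a • y.m + MulOpposite.op y.b • x.m := rfl
@[simp] theorem mul_b (x y : Tri A M B) : (x * y).b = x.b * y.b := rfl

@[simp] theorem e11_a (a : A) : (Tri.e11 a : Tri A M B).a = a := rfl
@[simp] theorem e11_m (a : A) : (Tri.e11 a : Tri A M B).m = 0 := rfl
@[simp] theorem e11_b (a : A) : (Tri.e11 a : Tri A M B).b = 0 := rfl
@[simp] theorem e12_a (m : M) : (Tri.e12 m : Tri A M B).a = 0 := rfl
@[simp] theorem e12_m (m : M) : (Tri.e12 m : Tri A M B).m = m := rfl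
@[simp] theorem e12_b (m : M) : (Tri.e12 m : Tri A M B).b = 0 := rfl
@[simp] theorem e22_a (b : B) : (Tri.e22 b : Tri A M B).a = 0 := rfl
@[simp] theorem e22_m (b : B) : (Tri.e22 b : Tri A M B).m = 0 := rfl
@[simp] theorem e22_b (b : B) : (Tri.e22 b : Tri A M B).b = b := rfl

end TriAux

open TriAux

theorem jordan_add_e11_mul_e12_e12_mul_e22
    {R A M B R' : Type*} [CommRing R]
    [NonUnitalRing A] [NonUnitalRing B] [AddCommGroup M]
    [Module R A] [Module R B] [Module R M]
    [SMulCommClass R A A] [IsScalarTower R A A]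
    [SMulCommClass R B B] [IsScalarTower R B B]
    [SMul A M] [SMul Bᵐᵒᵖ M] [TriBimodule R A M B]
    (hfaithA : ∀ a : A, (∀ m : M, a • m = 0) → a = 0)
    (hfaithB : ∀ b : B, (∀ m : M, MulOpposite.op b • m = 0) → b = 0)
    (hA' : ∀ a : A, (∀ x : A, a * x + x * a = 0) → a = 0)
    (hB' : ∀ b : B, (∀ y : B, b * y + y * b = 0) → b = 0)
    [Ring R'] (φ : Tri A M B → R')
    (hbij : Function.Bijective φ)
    (hjordan : ∀ x y : Tri A M B, φ (x * y + y * x) = φ x * φ y + φ y * φ x) :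
    ∀ (a : A) (m m' : M) (b : B), φ ((Tri.e11 a : Tri A M B) * Tri.e12 m + Tri.e12 m' * Tri.e22 b) = φ ((Tri.e11 a : Tri A M B) * Tri.e12 m) + φ ((Tri.e12 m' : Tri A M B) * Tri.e22 b) := by
  intro a m m' b
  -- basic zero lemmas for the bimodule actions
  have z1 : ∀ n : M, (0 : A) • n = 0 := by
    intro n
    have h : (0 : A) • n = (0 : A) • n + (0 : A) • n := by
      simpa using TriBimodule.add_smul_left (R := R) (B := B) (0 : A) (0 : A) n
    exact (left_eq_add.mp h)
  have z2 : ∀ n : M, (0 : Bᵐᵒᵖ) • n = 0 := by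
    intro n
    have h : (0 : Bᵐᵒᵖ) • n = (0 : Bᵐᵒᵖ) • n + (0 : Bᵐᵒᵖ) • n := by
      simpa using TriBimodule.add_smul_right (R := R) (A := A) (0 : Bᵐᵒᵖ) (0 : Bᵐᵒᵖ) n
    exact (left_eq_add.mp h)
  have z3 : ∀ x : A, x • (0 : M) = 0 := by
    intro x
    have h : x • (0 : M) = x • (0 : M) + x • (0 : M) := by
      simpa using TriBimodule.smul_add_left (R := R) (B := B) x (0 : M) (0 : M)
    exact (left_eq_add.mp h)
  have z4 : ∀ y : Bᵐᵒᵖ, y • (0 : M) = 0 := by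
    intro y
    have h : y • (0 : M) = y • (0 : M) + y • (0 : M) := by
      simpa using TriBimodule.smul_add_right (R := R) (A := A) y (0 : M) (0 : M)
    exact (left_eq_add.mp h)
  -- φ 0 = 0
  have hφ0 : φ 0 = 0 := by
    obtain ⟨s₀, hs₀⟩ := hbij.2 (0 : R')
    have h := hjordan 0 s₀
    have h0 : (0 : Tri A M B) * s₀ + s₀ * 0 = 0 := by
      ext <;> simp [z1, z2, z3, z4]
    rw [h0, hs₀] at h
    simpa using h
  -- the two key elements
  set X : Tri A M B := ⟨a, m', 0⟩ with hXdef
  set Y : Tri A M B := ⟨0, m, b⟩ with hYdef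
  -- key product identities in T
  have hXY : X * Y + Y * X = Tri.e11 a * Tri.e12 m + Tri.e12 m' * Tri.e22 b := by
    ext <;> simp [hXdef, hYdef, z1, z2, z3, z4]
  have hXb12 : X * Tri.e12 m + Tri.e12 m * X = Tri.e11 a * Tri.e12 m := by
    ext <;> simp [hXdef, z1, z2, z3, z4]
  have hXb22 : X * Tri.e22 b + Tri.e22 b * X = Tri.e12 m' * Tri.e22 b := by
    ext <;> simp [hXdef, z1, z2, z3, z4]
  -- the "additivity defect" of Y has a preimage e
  obtain ⟨e, he⟩ := hbij.2 (φ Y - φ (Tri.e12 m) - φ (Tri.e22 b))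
  have hE : ∀ s : Tri A M B, φ (e * s + s * e) =
      φ (Y * s + s * Y) - φ (Tri.e12 m * s + s * Tri.e12 m)
        - φ (Tri.e22 b * s + s * Tri.e22 b) := by
    intro s
    rw [hjordan e s, hjordan Y s, hjordan (Tri.e12 m) s, hjordan (Tri.e22 b) s, he]
    noncomm_ring
  -- e Jordan-annihilates T11
  have he11 : ∀ x : A, e * Tri.e11 x + Tri.e11 x * e = 0 := by
    intro x
    apply hbij.1
    rw [hE (Tri.e11 x), hφ0]
    have h1 : Y * Tri.e11 x + Tri.e11 x * Y
        = (Tri.e12 m : Tri A M B) * Tri.e11 x + Tri.e11 x * Tri.e12 m := by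
      ext <;> simp [hYdef, z1, z2, z3, z4]
    have h2 : (Tri.e22 b : Tri A M B) * Tri.e11 x + Tri.e11 x * Tri.e22 b = 0 := by
      ext <;> simp [z1, z2, z3, z4]
    rw [h1, h2, hφ0]
    abel
  -- e Jordan-annihilates T12
  have he12 : ∀ w : M, e * Tri.e12 w + Tri.e12 w * e = 0 := by
    intro w
    apply hbij.1
    rw [hE (Tri.e12 w), hφ0]
    have h1 : Y * Tri.e12 w + Tri.e12 w * Y
        = (Tri.e22 b : Tri A M B) * Tri.e12 w + Tri.e12 w * Tri.e22 b := by
      ext <;> simp [hYdef, z1, z2, z3, z4]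
    have h2 : (Tri.e12 m : Tri A M B) * Tri.e12 w + Tri.e12 w * Tri.e12 m = 0 := by
      ext <;> simp [z1, z2, z3, z4]
    rw [h1, h2, hφ0]
    abel
  -- components of e
  have hea : e.a = 0 := by
    apply hA'
    intro x
    have := congrArg Tri.a (he11 x)
    simpa using this
  have hem : ∀ x : A, x • e.m = 0 := by
    intro x
    have := congrArg Tri.m (he11 x)
    simpa [z1, z2, z3, z4] using this
  have heb : e.b = 0 := by
    apply hfaithB
    intro w
    have := congrArg Tri.m (he12 w)
    simpa [hea, z1, z2, z3, z4] using this
  -- X Jordan-annihilates e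
  have hXe : X * e + e * X = 0 := by
    ext <;> simp [hXdef, hea, heb, hem, z1, z2, z3, z4]
  -- transfer to R'
  have hE0 : φ X * φ e + φ e * φ X = 0 := by
    rw [← hjordan, hXe, hφ0]
  have hP' : φ X * φ (Tri.e12 m) + φ (Tri.e12 m) * φ X
      = φ ((Tri.e11 a : Tri A M B) * Tri.e12 m) := by
    rw [← hjordan, hXb12]
  have hQ' : φ X * φ (Tri.e22 b) + φ (Tri.e22 b) * φ X
      = φ ((Tri.e12 m' : Tri A M B) * Tri.e22 b) := by
    rw [← hjordan, hXb22]
  have hYsum : φ Y = φ e + φ (Tri.e12 m) + φ (Tri.e22 b) := by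
    rw [he]; abel
  calc φ ((Tri.e11 a : Tri A M B) * Tri.e12 m + Tri.e12 m' * Tri.e22 b)
      = φ (X * Y + Y * X) := by rw [hXY]
    _ = φ X * φ Y + φ Y * φ X := hjordan X Y
    _ = (φ X * φ e + φ e * φ X) + (φ X * φ (Tri.e12 m) + φ (Tri.e12 m) * φ X)
          + (φ X * φ (Tri.e22 b) + φ (Tri.e22 b) * φ X) := by
        rw [hYsum]; noncomm_ring
    _ = φ ((Tri.e11 a : Tri A M B) * Tri.e12 m)
          + φ ((Tri.e12 m' : Tri A M B) * Tri.e22 b) := by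
        rw [hE0, hP', hQ', zero_add]
end
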